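/- arXiv:2007.15428 — 5 statements merged into one kernel-verified Lean document; each statement's English description precedes it below -/
import Mathlib

section
/- (Comparison principle) Let k be a dispersal kernel satisfying (K1), let f ∈ C¹([0,1]), and let T > 0. Suppose ū, u̲ : [0,T]×ℝ → [0,1] are bounded continuous functions, differentiable in t on (0,T], such that for all t ∈ (0,T] and x ∈ ℝ: ∂_t ū(t,x) − ∫_ℝ k(x−y)ū(t,y) dy + ū(t,x) − f(ū(t,x)) ≥ 0 ≥ ∂_t u̲(t,x) − ∫_ℝ k(x−y)u̲(t,y) dy + u̲(t,x) − f(u̲(t,x)). If ū(0,x) ≥ u̲(0,x) for all x ∈ ℝ, then ū(t,x) ≥ u̲(t,x) for all t ∈ [0,T] and x ∈ ℝ. -/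
/-!
Let `w = lb - ub` and let `L` be a Lipschitz constant of `f` on `[0,1]`. Subtracting the two
differential inequalities, at any point where `w(t,x) ≥ 0` and `w(t,·) ≤ M` the nonlocal term
contributes at most `M` (the kernel has mass one) and the reaction term at most `L M`, so
`∂ₜ w(t,x) ≤ (L + 1) M`. Rather than a Gronwall argument for `sup_x w(t,x)`, which need not be
differentiable in `t`, iterate this pointwise in `x`: starting from `w ≤ 1`, a barrier argument
in `t` turns `w ≤ (Ct)ⁿ/n!` into `w ≤ (Ct)ⁿ⁺¹/(n+1)!` with `C = L + 1`, and letting `n → ∞`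
gives `w ≤ 0`.
-/

open MeasureTheory Real Filter Set Topology

noncomputable section

def IsKernel (k : ℝ → ℝ) : Prop :=
  Continuous k ∧ (∀ x, 0 ≤ k x) ∧ (∫ x, k x) = 1

def CondK1 (k : ℝ → ℝ) : Prop :=
  ∃ l : ℝ, 0 < l ∧ Integrable (fun x => k x * Real.exp (l * |x|))

open scoped Nat

theorem image_nonpos_of_deriv_nonpos_of_pos {h h' : ℝ → ℝ} {a b : ℝ}
    (hc : ContinuousOn h (Icc a b)) (hd : ∀ s ∈ Ioo a b, HasDerivAt h (h' s) s)
    (ha : h a ≤ 0) (hpos : ∀ s ∈ Ioo a b, 0 < h s → h' s ≤ 0) :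
    ∀ t ∈ Icc a b, h t ≤ 0 := by
  intro t ht
  by_contra! ht_pos
  have hct : ContinuousOn h (Icc a t) := hc.mono (Icc_subset_Icc_right ht.2)
  set S := Icc a t ∩ h ⁻¹' Iic 0
  have hS : IsCompact S := isCompact_Icc.of_isClosed_subset
    (hct.preimage_isClosed_of_isClosed isClosed_Icc isClosed_Iic) inter_subset_left
  obtain ⟨⟨hs₀a, hs₀t⟩, hs₀⟩ : sSup S ∈ S := hS.sSup_mem ⟨a, ⟨le_rfl, ht.1⟩, ha⟩
  have h_pos_after : ∀ s ∈ Ioc (sSup S) t, 0 < h s := fun s hs => by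
    by_contra! hs'
    exact (le_csSup hS.bddAbove ⟨⟨hs₀a.trans hs.1.le, hs.2⟩, hs'⟩).not_gt hs.1
  have hanti : AntitoneOn h (Icc (sSup S) t) := by
    refine antitoneOn_of_hasDerivWithinAt_nonpos (f' := h') (convex_Icc _ _)
      (hct.mono (Icc_subset_Icc_left hs₀a)) (fun s hs => ?_) (fun s hs => ?_) <;>
      rw [interior_Icc] at hs
    · exact (hd s ⟨hs₀a.trans_lt hs.1, hs.2.trans_le ht.2⟩).hasDerivWithinAt
    · exact hpos s ⟨hs₀a.trans_lt hs.1, hs.2.trans_le ht.2⟩ (h_pos_after s ⟨hs.1, hs.2.le⟩)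
  exact (hanti ⟨le_rfl, hs₀t⟩ ⟨hs₀t, le_rfl⟩ hs₀t |>.trans hs₀).not_gt ht_pos

theorem hasDerivAt_mul_pow_div_factorial (A C s : ℝ) (n : ℕ) :
    HasDerivAt (fun s => A * (C * s) ^ (n + 1) / (n + 1)!) (C * (A * (C * s) ^ n / n !)) s := by
  refine ((((hasDerivAt_id' s).const_mul C).pow (n + 1)).const_mul A |>.div_const _).congr_deriv ?_
  rw [Nat.factorial_succ]
  push_cast
  field_simp

section NonlocalGronwall

variable {α : Type*} {w dw : ℝ → α → ℝ} {T A C : ℝ}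

theorem le_mul_pow_div_factorial_of_deriv_le (hA : 0 ≤ A) (hC : 0 ≤ C)
    (hcont : ∀ x, ContinuousOn (fun t => w t x) (Icc 0 T))
    (hderiv : ∀ x, ∀ t ∈ Ioo 0 T, HasDerivAt (fun s => w s x) (dw t x) t)
    (hbdd : ∀ t ∈ Icc 0 T, ∀ x, w t x ≤ A) (hinit : ∀ x, w 0 x ≤ 0)
    (hdw : ∀ t ∈ Ioo 0 T, ∀ x M, 0 ≤ w t x → (∀ y, w t y ≤ M) → dw t x ≤ C * M) (n : ℕ) :
    ∀ t ∈ Icc 0 T, ∀ x, w t x ≤ A * (C * t) ^ n / n ! := by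
  induction n with
  | zero => simpa using hbdd
  | succ n ih =>
    intro t ht x
    have hsub : Ioo 0 t ⊆ Ioo 0 T := Ioo_subset_Ioo_right ht.2
    have key := image_nonpos_of_deriv_nonpos_of_pos (a := 0) (b := t)
      (h := fun s => w s x - A * (C * s) ^ (n + 1) / (n + 1)!)
      (h' := fun s => dw s x - C * (A * (C * s) ^ n / n !))
      (((hcont x).mono (Icc_subset_Icc_right ht.2)).sub (by fun_prop))
      (fun s hs => (hderiv x s (hsub hs)).sub (hasDerivAt_mul_pow_div_factorial A C s n))
      (by simpa using hinit x)
      (fun s hs hpos => by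
        have hbound : 0 ≤ A * (C * s) ^ (n + 1) / (n + 1)! := by
          have := hs.1.le; positivity
        have := hdw s (hsub hs) x _ (by linarith) (ih s (Ioo_subset_Icc_self (hsub hs)))
        linarith)
    linarith [key t (right_mem_Icc.2 ht.1)]

theorem nonpos_of_deriv_le_mul_bound (hC : 0 ≤ C)
    (hcont : ∀ x, ContinuousOn (fun t => w t x) (Icc 0 T))
    (hderiv : ∀ x, ∀ t ∈ Ioo 0 T, HasDerivAt (fun s => w s x) (dw t x) t)
    (hbdd : ∀ t ∈ Icc 0 T, ∀ x, w t x ≤ A) (hinit : ∀ x, w 0 x ≤ 0)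
    (hdw : ∀ t ∈ Ioo 0 T, ∀ x M, 0 ≤ w t x → (∀ y, w t y ≤ M) → dw t x ≤ C * M) :
    ∀ t ∈ Icc 0 T, ∀ x, w t x ≤ 0 := by
  intro t ht x
  have hle := fun n => le_mul_pow_div_factorial_of_deriv_le (le_max_right A 0) hC hcont hderiv
    (fun t ht x => (hbdd t ht x).trans (le_max_left A 0)) hinit hdw n t ht x
  have hlim := (FloorSemiring.tendsto_pow_div_factorial_atTop (C * t)).const_mul (max A 0)
  rw [mul_zero] at hlim
  exact ge_of_tendsto hlim (Eventually.of_forall fun n => (hle n).trans_eq (mul_div_assoc ..))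

end NonlocalGronwall

namespace IsKernel

variable {k : ℝ → ℝ}

theorem integrable (hk : IsKernel k) : Integrable k :=
  integrable_of_integral_eq_one hk.2.2

theorem integral_comp_sub_left (hk : IsKernel k) (x : ℝ) : ∫ y, k (x - y) = 1 := by
  rw [integral_sub_left_eq_self k volume x, hk.2.2]

theorem integrable_mul_of_bounded (hk : IsKernel k) {u : ℝ → ℝ} {c : ℝ}
    (hu : AEStronglyMeasurable u) (hbdd : ∀ y, ‖u y‖ ≤ c) (x : ℝ) :
    Integrable fun y => k (x - y) * u y :=
  (hk.integrable.comp_sub_left x).mul_bdd hu (ae_of_all _ hbdd)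

theorem integral_mul_sub_le {u v : ℝ → ℝ} {M x : ℝ} (hk : IsKernel k)
    (hu : Integrable fun y => k (x - y) * u y) (hv : Integrable fun y => k (x - y) * v y)
    (huv : ∀ y, u y - v y ≤ M) :
    (∫ y, k (x - y) * u y) - ∫ y, k (x - y) * v y ≤ M := by
  rw [← integral_sub hu hv]
  calc ∫ y, k (x - y) * u y - k (x - y) * v y
      ≤ ∫ y, k (x - y) * M :=
        integral_mono (hu.sub hv) ((hk.integrable.comp_sub_left x).mul_const M)
          fun y => by simpa [← mul_sub] using mul_le_mul_of_nonneg_left (huv y) (hk.2.1 (x - y))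
    _ = M := by rw [integral_mul_const, hk.integral_comp_sub_left, one_mul]

end IsKernel

def kppOperator (k f u : ℝ → ℝ) (x : ℝ) : ℝ :=
  (∫ y, k (x - y) * u y) - u x + f (u x)

theorem kppOperator_sub_le {k f u v : ℝ → ℝ} {K : NNReal} {M x : ℝ} (hk : IsKernel k)
    (hf : LipschitzOnWith K f (Icc 0 1)) (hu : AEStronglyMeasurable u)
    (hv : AEStronglyMeasurable v)
    (hu01 : ∀ y, u y ∈ Icc 0 1) (hv01 : ∀ y, v y ∈ Icc 0 1)
    (hvu : ∀ y, v y - u y ≤ M) (hx : 0 ≤ v x - u x) :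
    kppOperator k f v x - kppOperator k f u x ≤ (K + 1) * M := by
  have hnorm_le_one : ∀ {u : ℝ → ℝ}, (∀ y, u y ∈ Icc 0 1) → ∀ y, ‖u y‖ ≤ 1 := fun h y => by
    rw [Real.norm_of_nonneg (h y).1]; exact (h y).2
  have hnonlocal := hk.integral_mul_sub_le
    (hk.integrable_mul_of_bounded hv (hnorm_le_one hv01) x)
    (hk.integrable_mul_of_bounded hu (hnorm_le_one hu01) x) hvu
  have hreaction : f (v x) - f (u x) ≤ K * M := by
    have hlip := hf.dist_le_mul (v x) (hv01 x) (u x) (hu01 x)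
    rw [Real.dist_eq, Real.dist_eq, abs_of_nonneg hx] at hlip
    exact (le_abs_self _).trans (hlip.trans (mul_le_mul_of_nonneg_left (hvu x) K.2))
  unfold kppOperator
  linarith [hvu x]

theorem comparison_principle_general (k f : ℝ → ℝ)
    (hker : IsKernel k)
    (hf : ContDiffOn ℝ 1 f (Icc 0 1))
    (T : ℝ)
    (ub lb : ℝ → ℝ → ℝ)
    (hubc : ContinuousOn (fun p : ℝ × ℝ => ub p.1 p.2) (Icc 0 T ×ˢ univ))
    (hlbc : ContinuousOn (fun p : ℝ × ℝ => lb p.1 p.2) (Icc 0 T ×ˢ univ))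
    (hubr : ∀ t ∈ Icc (0:ℝ) T, ∀ x : ℝ, ub t x ∈ Icc (0:ℝ) 1)
    (hlbr : ∀ t ∈ Icc (0:ℝ) T, ∀ x : ℝ, lb t x ∈ Icc (0:ℝ) 1)
    (hub : ∀ x : ℝ, ∀ t ∈ Ioc (0:ℝ) T, ∃ d : ℝ,
      HasDerivWithinAt (fun s => ub s x) d (Icc 0 T) t ∧
      0 ≤ d - (∫ y, k (x - y) * ub t y) + ub t x - f (ub t x))
    (hlb : ∀ x : ℝ, ∀ t ∈ Ioc (0:ℝ) T, ∃ d : ℝ,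
      HasDerivWithinAt (fun s => lb s x) d (Icc 0 T) t ∧
      d - (∫ y, k (x - y) * lb t y) + lb t x - f (lb t x) ≤ 0)
    (hinit : ∀ x : ℝ, lb 0 x ≤ ub 0 x) :
    ∀ t ∈ Icc (0:ℝ) T, ∀ x : ℝ, lb t x ≤ ub t x := by
  obtain ⟨K, hK⟩ :=
    (hf.locallyLipschitzOn (convex_Icc 0 1)).exists_lipschitzOnWith_of_compact isCompact_Icc
  choose! dub hub_deriv hub_super using hub
  choose! dlb hlb_deriv hlb_sub using hlb
  have hderivAt {u du : ℝ → ℝ → ℝ}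
      (h : ∀ x, ∀ t ∈ Ioc 0 T, HasDerivWithinAt (fun s => u s x) (du x t) (Icc 0 T) t)
      (x : ℝ) (t : ℝ) (ht : t ∈ Ioo 0 T) : HasDerivAt (fun s => u s x) (du x t) t :=
    (h x t (Ioo_subset_Ioc_self ht)).hasDerivAt (Icc_mem_nhds ht.1 ht.2)
  intro t ht x
  suffices lb t x - ub t x ≤ 0 by linarith
  refine nonpos_of_deriv_le_mul_bound (w := fun t x => lb t x - ub t x)
    (dw := fun t x => dlb x t - dub x t) (A := 1) (C := K + 1) (by positivity)
    (fun x => (hlbc.uncurry_right x (mem_univ x)).sub (hubc.uncurry_right x (mem_univ x)))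
    (fun x t ht => (hderivAt hlb_deriv x t ht).sub (hderivAt hub_deriv x t ht))
    (fun t ht x => by linarith [(hlbr t ht x).2, (hubr t ht x).1])
    (fun x => sub_nonpos.2 (hinit x)) (fun t ht x M hx hM => ?_) t ht x
  have htIcc := Ioo_subset_Icc_self ht
  have hop := kppOperator_sub_le hker hK
    (continuousOn_univ.mp (hubc.uncurry_left t htIcc)).aestronglyMeasurable
    (continuousOn_univ.mp (hlbc.uncurry_left t htIcc)).aestronglyMeasurable
    (hubr t htIcc) (hlbr t htIcc) hM hx
  unfold kppOperator at hop
  linarith [hub_super x t (Ioo_subset_Ioc_self ht), hlb_sub x t (Ioo_subset_Ioc_self ht)]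

/-- Comparison principle: if `ub` is an upper solution and `lb`
a lower solution of the nonlocal dispersal Fisher-KPP equation on `[0,T] × ℝ`
that are ordered at time `0`, then they are ordered on all of `[0,T] × ℝ`. -/
theorem comparison_principle (k f : ℝ → ℝ)
    (hker : IsKernel k) (hK1 : CondK1 k)
    (hf : ContDiffOn ℝ 1 f (Icc 0 1))
    (T : ℝ) (hT : 0 < T)
    (ub lb : ℝ → ℝ → ℝ)
    (hubc : ContinuousOn (fun p : ℝ × ℝ => ub p.1 p.2) (Icc 0 T ×ˢ univ))
    (hlbc : ContinuousOn (fun p : ℝ × ℝ => lb p.1 p.2) (Icc 0 T ×ˢ univ))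
    (hubr : ∀ t ∈ Icc (0:ℝ) T, ∀ x : ℝ, ub t x ∈ Icc (0:ℝ) 1)
    (hlbr : ∀ t ∈ Icc (0:ℝ) T, ∀ x : ℝ, lb t x ∈ Icc (0:ℝ) 1)
    (hub : ∀ x : ℝ, ∀ t ∈ Ioc (0:ℝ) T, ∃ d : ℝ,
      HasDerivWithinAt (fun s => ub s x) d (Icc 0 T) t ∧
      0 ≤ d - (∫ y, k (x - y) * ub t y) + ub t x - f (ub t x))
    (hlb : ∀ x : ℝ, ∀ t ∈ Ioc (0:ℝ) T, ∃ d : ℝ,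
      HasDerivWithinAt (fun s => lb s x) d (Icc 0 T) t ∧
      d - (∫ y, k (x - y) * lb t y) + lb t x - f (lb t x) ≤ 0)
    (hinit : ∀ x : ℝ, lb 0 x ≤ ub 0 x) :
    ∀ t ∈ Icc (0:ℝ) T, ∀ x : ℝ, lb t x ≤ ub t x :=
  comparison_principle_general k f hker hf T ub lb hubc hlbc hubr hlbr hub hlb hinit
end
end

section
/- Fix δ ∈ (0,1), A > 0 and D > 0, and for B > 0 define H_B(z) = A·z − B·z^{1+δ} − D·z^{1−δ} for z > 0. Then: (a) for every B ∈ (0, A²/(4D)), H_B^max := sup_{z>0} H_B(z) > 0, the supremum is attained at some z₀ > 0, and the set {z > 0 : H_B(z) > 0} is an open interval (μ_B, ν_B) containing z₀; (b) sup_{z>0} H_{A²/(4D)}(z) = 0; (c) as B → (A²/(4D))⁻ one has H_B^max → 0⁺ and ν_B − μ_B → 0⁺. -/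
open Real Filter Set Topology

noncomputable section

/-- The auxiliary function `H_B(z) = A z - B z^{1+δ} - D z^{1-δ}`. -/
def Hfun (A B D δ z : ℝ) : ℝ := A * z - B * z ^ (1 + δ) - D * z ^ (1 - δ)

/-- `H_B^max = sup_{z > 0} H_B(z)`. -/
def Hmax (A B D δ : ℝ) : ℝ := sSup (Hfun A B D δ '' Ioi 0)

/-- The left endpoint `μ_B` of the positivity set of `H_B`. -/
def muB (A B D δ : ℝ) : ℝ := sInf {z : ℝ | 0 < z ∧ 0 < Hfun A B D δ z}

/-- The right endpoint `ν_B` of the positivity set of `H_B`. -/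
def nuB (A B D δ : ℝ) : ℝ := sSup {z : ℝ | 0 < z ∧ 0 < Hfun A B D δ z}

/-!
For `z > 0` we have `H_B(z) = -z^{1-δ} q(z^δ)` with `q(t) = B t² - A t + D`, so `H_B(z) > 0`
exactly when `z^δ` lies strictly between the roots `t₋ < t₊` of `q`. When `4BD < A²` the
positivity set is therefore the explicit interval `(t₋^{1/δ}, t₊^{1/δ})`, and the supremum of
`H_B` is attained on its closure by compactness. Completing the square gives
`H_B(z) ≤ z^{1-δ} (A² - 4BD) / (4B)`, which vanishes at `B = A²/(4D)`; there the two roots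
merge, and since they depend continuously on `B`, both `H_B^max` and `ν_B - μ_B` tend to `0`.
-/

theorem exists_isGreatest_image_of_setOf_pos_eq_Ioo {f : ℝ → ℝ} {U : Set ℝ} {a b : ℝ}
    (hab : a < b) (hU : Icc a b ⊆ U) (hf : ContinuousOn f (Icc a b))
    (hpos : {z | z ∈ U ∧ 0 < f z} = Ioo a b) :
    ∃ z₀ ∈ Ioo a b, IsGreatest (f '' U) (f z₀) := by
  have hmem (z : ℝ) : z ∈ U ∧ 0 < f z ↔ z ∈ Ioo a b := Set.ext_iff.1 hpos z
  obtain ⟨z₀, hz₀, hmax⟩ := isCompact_Icc.exists_isMaxOn (nonempty_Icc.2 hab.le) hf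
  obtain ⟨m, hm⟩ := nonempty_Ioo.2 hab
  have hfz₀ : 0 < f z₀ := ((hmem m).2 hm).2.trans_le (hmax (Ioo_subset_Icc_self hm))
  refine ⟨z₀, (hmem z₀).1 ⟨hU hz₀, hfz₀⟩, mem_image_of_mem f (hU hz₀), ?_⟩
  rintro _ ⟨y, hyU, rfl⟩
  by_cases hy : y ∈ Icc a b
  · exact hmax hy
  · have : ¬ 0 < f y := fun h => hy (Ioo_subset_Icc_self ((hmem y).1 ⟨hyU, h⟩))
    linarith

section

variable {A B D δ : ℝ}

def rootMinus (A B D : ℝ) : ℝ := (A - √(A ^ 2 - 4 * B * D)) / (2 * B)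

def rootPlus (A B D : ℝ) : ℝ := (A + √(A ^ 2 - 4 * B * D)) / (2 * B)

theorem quadratic_eq_mul_sub_rootMinus_mul_sub_rootPlus (hB : 0 < B)
    (hdisc : 0 ≤ A ^ 2 - 4 * B * D) (t : ℝ) :
    B * t ^ 2 - A * t + D = B * (t - rootMinus A B D) * (t - rootPlus A B D) := by
  have hs := Real.sq_sqrt hdisc
  unfold rootMinus rootPlus
  generalize √(A ^ 2 - 4 * B * D) = s at hs ⊢
  field_simp
  linear_combination hs

theorem rootMinus_pos (hA : 0 < A) (hB : 0 < B) (hD : 0 < D) : 0 < rootMinus A B D := by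
  have : √(A ^ 2 - 4 * B * D) < A := (Real.sqrt_lt' hA).2 (by nlinarith [mul_pos hB hD])
  unfold rootMinus
  exact div_pos (by linarith) (by positivity)

theorem rootMinus_lt_rootPlus (hB : 0 < B) (hdisc : 0 < A ^ 2 - 4 * B * D) :
    rootMinus A B D < rootPlus A B D := by
  have := Real.sqrt_pos.2 hdisc
  unfold rootMinus rootPlus
  gcongr
  linarith

theorem quadratic_neg_iff (hB : 0 < B) (hdisc : 0 ≤ A ^ 2 - 4 * B * D) (t : ℝ) :
    B * t ^ 2 - A * t + D < 0 ↔ t ∈ Ioo (rootMinus A B D) (rootPlus A B D) := by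
  have hle : rootMinus A B D ≤ rootPlus A B D := by
    unfold rootMinus rootPlus
    gcongr
    linarith [Real.sqrt_nonneg (A ^ 2 - 4 * B * D)]
  rw [quadratic_eq_mul_sub_rootMinus_mul_sub_rootPlus hB hdisc, mul_assoc, mul_neg_iff,
    mul_neg_iff, mem_Ioo]
  constructor
  · rintro (⟨-, ⟨h1, h2⟩ | ⟨h1, h2⟩⟩ | ⟨hB', -⟩)
    · exact ⟨by linarith, by linarith⟩
    · exact absurd hle (by linarith)
    · exact absurd hB (by linarith)
  · rintro ⟨h1, h2⟩
    exact Or.inl ⟨hB, Or.inl ⟨by linarith, by linarith⟩⟩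

theorem neg_quadratic_le (hB : 0 < B) (t : ℝ) :
    -(B * t ^ 2 - A * t + D) ≤ (A ^ 2 - 4 * B * D) / (4 * B) := by
  rw [le_div_iff₀ (by positivity)]
  nlinarith [sq_nonneg (2 * B * t - A)]

theorem Hfun_eq_neg_mul_quadratic {z : ℝ} (hz : 0 < z) :
    Hfun A B D δ z = -(z ^ (1 - δ) * (B * (z ^ δ) ^ 2 - A * z ^ δ + D)) := by
  have h1 : z = z ^ (1 - δ) * z ^ δ := by rw [← rpow_add hz]; simp
  have h2 : z ^ (1 + δ) = z ^ (1 - δ) * z ^ δ * z ^ δ := by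
    rw [← rpow_add hz, ← rpow_add hz]; ring_nf
  unfold Hfun
  linear_combination A * h1 - B * h2

theorem Hfun_pos_iff {z : ℝ} (hz : 0 < z) :
    0 < Hfun A B D δ z ↔ B * (z ^ δ) ^ 2 - A * z ^ δ + D < 0 := by
  rw [Hfun_eq_neg_mul_quadratic hz, neg_pos]
  conv_lhs => rw [← mul_zero (z ^ (1 - δ))]
  exact mul_lt_mul_iff_of_pos_left (rpow_pos_of_pos hz _)

theorem Hfun_le (hB : 0 < B) {z : ℝ} (hz : 0 < z) :
    Hfun A B D δ z ≤ z ^ (1 - δ) * ((A ^ 2 - 4 * B * D) / (4 * B)) := by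
  rw [Hfun_eq_neg_mul_quadratic hz, ← mul_neg]
  exact mul_le_mul_of_nonneg_left (neg_quadratic_le hB _) (rpow_nonneg hz.le _)

theorem continuousOn_Hfun : ContinuousOn (Hfun A B D δ) (Ioi 0) := by
  intro z hz
  unfold Hfun
  fun_prop (disch := exact Or.inl (ne_of_gt hz))

theorem setOf_Hfun_pos_eq_Ioo (hA : 0 < A) (hB : 0 < B) (hD : 0 < D) (hδ : 0 < δ)
    (hdisc : 0 ≤ A ^ 2 - 4 * B * D) :
    {z | 0 < z ∧ 0 < Hfun A B D δ z} =
      Ioo (rootMinus A B D ^ δ⁻¹) (rootPlus A B D ^ δ⁻¹) := by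
  have hminus := rootMinus_pos hA hB hD
  have hplus : 0 ≤ rootPlus A B D := by unfold rootPlus; positivity
  ext z
  simp only [mem_ofPred_eq, mem_Ioo]
  constructor
  · rintro ⟨hz, hHz⟩
    obtain ⟨h1, h2⟩ := (quadratic_neg_iff hB hdisc _).1 ((Hfun_pos_iff hz).1 hHz)
    exact ⟨(rpow_inv_lt_iff_of_pos hminus.le hz.le hδ).2 h1,
      (lt_rpow_inv_iff_of_pos hz.le hplus hδ).2 h2⟩
  · rintro ⟨h1, h2⟩
    have hz : 0 < z := (rpow_pos_of_pos hminus _).trans h1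
    refine ⟨hz, (Hfun_pos_iff hz).2 ((quadratic_neg_iff hB hdisc _).2 ⟨?_, ?_⟩)⟩
    · exact (rpow_inv_lt_iff_of_pos hminus.le hz.le hδ).1 h1
    · exact (lt_rpow_inv_iff_of_pos hz.le hplus hδ).1 h2

theorem discr_pos_of_lt (hD : 0 < D) (h : B < A ^ 2 / (4 * D)) : 0 < A ^ 2 - 4 * B * D := by
  rw [lt_div_iff₀ (by positivity)] at h
  linarith

theorem rootMinus_rpow_lt_rootPlus_rpow (hA : 0 < A) (hB : 0 < B) (hD : 0 < D) (hδ : 0 < δ)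
    (hdisc : 0 < A ^ 2 - 4 * B * D) :
    rootMinus A B D ^ δ⁻¹ < rootPlus A B D ^ δ⁻¹ :=
  rpow_lt_rpow (rootMinus_pos hA hB hD).le (rootMinus_lt_rootPlus hB hdisc) (inv_pos.2 hδ)

theorem muB_eq (hA : 0 < A) (hB : 0 < B) (hD : 0 < D) (hδ : 0 < δ)
    (hdisc : 0 < A ^ 2 - 4 * B * D) : muB A B D δ = rootMinus A B D ^ δ⁻¹ := by
  rw [muB, setOf_Hfun_pos_eq_Ioo hA hB hD hδ hdisc.le,
    csInf_Ioo (rootMinus_rpow_lt_rootPlus_rpow hA hB hD hδ hdisc)]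

theorem nuB_eq (hA : 0 < A) (hB : 0 < B) (hD : 0 < D) (hδ : 0 < δ)
    (hdisc : 0 < A ^ 2 - 4 * B * D) : nuB A B D δ = rootPlus A B D ^ δ⁻¹ := by
  rw [nuB, setOf_Hfun_pos_eq_Ioo hA hB hD hδ hdisc.le,
    csSup_Ioo (rootMinus_rpow_lt_rootPlus_rpow hA hB hD hδ hdisc)]

theorem muB_pos (hA : 0 < A) (hB : 0 < B) (hD : 0 < D) (hδ : 0 < δ)
    (hdisc : 0 < A ^ 2 - 4 * B * D) : 0 < muB A B D δ := by
  rw [muB_eq hA hB hD hδ hdisc]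
  exact rpow_pos_of_pos (rootMinus_pos hA hB hD) _

theorem setOf_Hfun_pos_eq_Ioo_muB_nuB (hA : 0 < A) (hB : 0 < B) (hD : 0 < D) (hδ : 0 < δ)
    (hdisc : 0 < A ^ 2 - 4 * B * D) :
    {z | 0 < z ∧ 0 < Hfun A B D δ z} = Ioo (muB A B D δ) (nuB A B D δ) := by
  rw [muB_eq hA hB hD hδ hdisc, nuB_eq hA hB hD hδ hdisc,
    setOf_Hfun_pos_eq_Ioo hA hB hD hδ hdisc.le]

theorem exists_Hfun_eq_Hmax (hA : 0 < A) (hB : 0 < B) (hD : 0 < D) (hδ : 0 < δ)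
    (hdisc : 0 < A ^ 2 - 4 * B * D) :
    ∃ z₀ ∈ Ioo (muB A B D δ) (nuB A B D δ), 0 < Hfun A B D δ z₀ ∧
      Hfun A B D δ z₀ = Hmax A B D δ := by
  have hS := setOf_Hfun_pos_eq_Ioo_muB_nuB hA hB hD hδ hdisc
  have hIcc : Icc (muB A B D δ) (nuB A B D δ) ⊆ Ioi 0 :=
    fun z hz => (muB_pos hA hB hD hδ hdisc).trans_le hz.1
  have hlt : muB A B D δ < nuB A B D δ := by
    rw [muB_eq hA hB hD hδ hdisc, nuB_eq hA hB hD hδ hdisc]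
    exact rootMinus_rpow_lt_rootPlus_rpow hA hB hD hδ hdisc
  obtain ⟨z₀, hz₀, hmax⟩ :=
    exists_isGreatest_image_of_setOf_pos_eq_Ioo hlt hIcc (continuousOn_Hfun.mono hIcc) hS
  exact ⟨z₀, hz₀, ((Set.ext_iff.1 hS z₀).2 hz₀).2, hmax.csSup_eq.symm⟩

theorem Hmax_le (hA : 0 < A) (hB : 0 < B) (hD : 0 < D) (hδ0 : 0 < δ) (hδ1 : δ ≤ 1)
    (hdisc : 0 < A ^ 2 - 4 * B * D) :
    Hmax A B D δ ≤ (rootPlus A B D ^ δ⁻¹) ^ (1 - δ) * ((A ^ 2 - 4 * B * D) / (4 * B)) := by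
  obtain ⟨z₀, hz₀, -, hmax⟩ := exists_Hfun_eq_Hmax hA hB hD hδ0 hdisc
  have hz₀pos : 0 < z₀ := (muB_pos hA hB hD hδ0 hdisc).trans hz₀.1
  have hz₀le : z₀ ≤ rootPlus A B D ^ δ⁻¹ := nuB_eq hA hB hD hδ0 hdisc ▸ hz₀.2.le
  rw [← hmax]
  refine (Hfun_le hB hz₀pos).trans (mul_le_mul_of_nonneg_right ?_ ?_)
  · exact rpow_le_rpow hz₀pos.le hz₀le (by linarith)
  · exact div_nonneg hdisc.le (by positivity)

theorem discr_critical_eq_zero (hD : D ≠ 0) : A ^ 2 - 4 * (A ^ 2 / (4 * D)) * D = 0 := by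
  field_simp
  ring

theorem Hfun_rootMinus_rpow_eq_zero (hA : 0 < A) (hB : 0 < B) (hD : 0 < D)
    (hδ : 0 < δ) (hdisc : 0 ≤ A ^ 2 - 4 * B * D) :
    Hfun A B D δ (rootMinus A B D ^ δ⁻¹) = 0 := by
  have hminus := rootMinus_pos hA hB hD
  rw [Hfun_eq_neg_mul_quadratic (rpow_pos_of_pos hminus _), rpow_inv_rpow hminus.le hδ.ne',
    quadratic_eq_mul_sub_rootMinus_mul_sub_rootPlus hB hdisc]
  ring

theorem Hmax_critical (hA : 0 < A) (hD : 0 < D) (hδ : 0 < δ) :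
    Hmax A (A ^ 2 / (4 * D)) D δ = 0 := by
  have hBc : 0 < A ^ 2 / (4 * D) := by positivity
  have hdisc := discr_critical_eq_zero (A := A) hD.ne'
  refine IsGreatest.csSup_eq ⟨⟨_, rpow_pos_of_pos (rootMinus_pos hA hBc hD) _,
    Hfun_rootMinus_rpow_eq_zero hA hBc hD hδ hdisc.ge⟩, ?_⟩
  rintro _ ⟨z, hz, rfl⟩
  simpa only [hdisc, zero_div, mul_zero] using Hfun_le (A := A) (D := D) (δ := δ) hBc hz

theorem continuousAt_rootMinus (hB : B ≠ 0) :
    ContinuousAt (fun b => rootMinus A b D) B := by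
  unfold rootMinus
  fun_prop (disch := simpa using hB)

theorem continuousAt_rootPlus (hB : B ≠ 0) :
    ContinuousAt (fun b => rootPlus A b D) B := by
  unfold rootPlus
  fun_prop (disch := simpa using hB)

theorem eventually_pos_and_discr_pos (hA : 0 < A) (hD : 0 < D) :
    ∀ᶠ B in 𝓝[<] (A ^ 2 / (4 * D)), 0 < B ∧ 0 < A ^ 2 - 4 * B * D := by
  filter_upwards [Ioo_mem_nhdsLT (by positivity : (0 : ℝ) < A ^ 2 / (4 * D))] with B hB
  exact ⟨hB.1, discr_pos_of_lt hD hB.2⟩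

theorem tendsto_Hmax_critical (hA : 0 < A) (hD : 0 < D) (hδ0 : 0 < δ) (hδ1 : δ ≤ 1) :
    Tendsto (fun B => Hmax A B D δ) (𝓝[<] (A ^ 2 / (4 * D))) (𝓝 0) := by
  have hBc : 0 < A ^ 2 / (4 * D) := by positivity
  have hcont : ContinuousAt (fun B => (rootPlus A B D ^ δ⁻¹) ^ (1 - δ) *
      ((A ^ 2 - 4 * B * D) / (4 * B))) (A ^ 2 / (4 * D)) := by
    have := continuousAt_rootPlus (A := A) (D := D) hBc.ne'
    fun_prop (disch := first | positivity | (right; linarith))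
  have hbound := hcont.tendsto.mono_left (nhdsWithin_le_nhds (s := Iio (A ^ 2 / (4 * D))))
  rw [discr_critical_eq_zero hD.ne', zero_div, mul_zero] at hbound
  refine tendsto_of_tendsto_of_tendsto_of_le_of_le' tendsto_const_nhds hbound ?_ ?_
  all_goals filter_upwards [eventually_pos_and_discr_pos hA hD] with B ⟨hB, hdisc⟩
  · obtain ⟨z₀, -, hpos, hmax⟩ := exists_Hfun_eq_Hmax hA hB hD hδ0 hdisc
    exact hmax ▸ hpos.le
  · exact Hmax_le hA hB hD hδ0 hδ1 hdisc

theorem tendsto_nuB_sub_muB_critical (hA : 0 < A) (hD : 0 < D) (hδ : 0 < δ) :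
    Tendsto (fun B => nuB A B D δ - muB A B D δ) (𝓝[<] (A ^ 2 / (4 * D))) (𝓝 0) := by
  have hBc : 0 < A ^ 2 / (4 * D) := by positivity
  have hcont : ContinuousAt (fun B => rootPlus A B D ^ δ⁻¹ - rootMinus A B D ^ δ⁻¹)
      (A ^ 2 / (4 * D)) := by
    have := continuousAt_rootPlus (A := A) (D := D) hBc.ne'
    have := continuousAt_rootMinus (A := A) (D := D) hBc.ne'
    fun_prop (disch := right; positivity)
  have hgap := hcont.tendsto.mono_left (nhdsWithin_le_nhds (s := Iio (A ^ 2 / (4 * D))))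
  rw [rootMinus, rootPlus, discr_critical_eq_zero hD.ne', Real.sqrt_zero, add_zero, sub_zero,
    sub_self] at hgap
  refine hgap.congr' ?_
  filter_upwards [eventually_pos_and_discr_pos hA hD] with B ⟨hB, hdisc⟩
  rw [muB_eq hA hB hD hδ hdisc, nuB_eq hA hB hD hδ hdisc]

end

/-- basic properties of the auxiliary function `H_B`:
(a) for `B ∈ (0, A²/(4D))` the supremum of `H_B` on `(0,∞)` is positive and
attained, and the positivity set is an open interval `(μ_B, ν_B)` containing
the maximizer; (b) the supremum vanishes at `B = A²/(4D)`; (c) `H_B^max → 0`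
and `ν_B - μ_B → 0` as `B → (A²/(4D))⁻`. -/
theorem Hfun_properties (A D δ : ℝ) (hA : 0 < A) (hD : 0 < D)
    (hδ : δ ∈ Ioo (0:ℝ) 1) :
    (∀ B ∈ Ioo (0:ℝ) (A^2 / (4*D)),
      0 < Hmax A B D δ ∧
      0 < muB A B D δ ∧
      (∃ z₀ ∈ Ioo (muB A B D δ) (nuB A B D δ),
        0 < z₀ ∧ Hfun A B D δ z₀ = Hmax A B D δ) ∧
      {z : ℝ | 0 < z ∧ 0 < Hfun A B D δ z} = Ioo (muB A B D δ) (nuB A B D δ)) ∧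
    Hmax A (A^2 / (4*D)) D δ = 0 ∧
    Tendsto (fun B => Hmax A B D δ) (𝓝[<] (A^2 / (4*D))) (𝓝 0) ∧
    Tendsto (fun B => nuB A B D δ - muB A B D δ) (𝓝[<] (A^2 / (4*D))) (𝓝 0) := by
  refine ⟨fun B ⟨hB, hBc⟩ => ?_, Hmax_critical hA hD hδ.1,
    tendsto_Hmax_critical hA hD hδ.1 hδ.2.le, tendsto_nuB_sub_muB_critical hA hD hδ.1⟩
  have hdisc := discr_pos_of_lt hD hBc
  have hμ := muB_pos hA hB hD hδ.1 hdisc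
  obtain ⟨z₀, hz₀, hpos, hmax⟩ := exists_Hfun_eq_Hmax hA hB hD hδ.1 hdisc
  exact ⟨hmax ▸ hpos, hμ, ⟨z₀, hz₀, hμ.trans hz₀.1, hmax⟩,
    setOf_Hfun_pos_eq_Ioo_muB_nuB hA hB hD hδ.1 hdisc⟩
end
end

section
/- Let k(x) = (2πσ)^{−1/2}·exp(−(x−α)²/(2σ)) with σ > 0 and α ∈ ℝ, set r = α/√(2σ), and let f satisfy (H). If f'(0) ≥ 1 then c_l* < 0 < c_r*. If f'(0) < 1, then there exists a constant r* > 0 such that: (i) if r > r* then 0 < c_l* < c_r*; (ii) if r = r* then 0 = c_l* < c_r*; (iii) if −r* < r < r* then c_l* < 0 < c_r*; (iv) if r = −r* then c_l* < c_r* = 0; (v) if r < −r* then c_l* < c_r* < 0. -/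
/-!
For the Gaussian kernel the moment generating function is `exp (α λ + σ λ² / 2)`, so `c(λ)` is
explicit. The reflection `x ↦ -x` turns `c_l*` for the mean `α` into `-c_r*` for the mean `-α`,
so only the sign of `c_r*` matters. From `exp x ≥ 1 + x` and AM-GM, `c(λ) ≥ α + √(2σ f'(0))`,
which gives `c_l* ≤ α - √(2σ f'(0)) < α + √(2σ f'(0)) ≤ c_r*`. The sign of `c_r*` is that of
the infimum over `λ > 0` of `exp (α λ + σ λ² / 2) - 1 + f'(0)`: for `α ≥ 0` it is positive,
and for `α < 0` it is `exp (-r²) - 1 + f'(0)`, attained at `λ = -α / σ`. Comparing with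
`exp (-r*²) = 1 - f'(0)` gives the threshold `r* = √(-log (1 - f'(0)))`.
-/

open MeasureTheory Real Filter Set Topology

noncomputable section

/-- Condition (K2): `k` is positive somewhere on each side of the origin. -/
def CondK2 (k : ℝ → ℝ) : Prop :=
  (∃ x₁ : ℝ, 0 < x₁ ∧ 0 < k x₁) ∧ (∃ x₂ : ℝ, x₂ < 0 ∧ 0 < k x₂)

/-- The moment generating function `λ ↦ ∫ k(x) e^{λ x} dx`. -/
def Mgf (k : ℝ → ℝ) (l : ℝ) : ℝ := ∫ x, k x * Real.exp (l * x)

/-- The function `c(λ) = λ⁻¹ (∫ k(x) e^{λx} dx - 1 + f'(0))`,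
with `f0` playing the role of `f'(0)`. -/
def cFun (k : ℝ → ℝ) (f0 : ℝ) (l : ℝ) : ℝ := l⁻¹ * (Mgf k l - 1 + f0)

/-- `l ∈ (0, λ⁺)`: `l` is positive and lies strictly below some exponent `m`
for which `∫ k(x) e^{m x} dx < ∞`. -/
def MemIpos (k : ℝ → ℝ) (l : ℝ) : Prop :=
  0 < l ∧ ∃ m : ℝ, l < m ∧ Integrable (fun x => k x * Real.exp (m * x))

/-- `l ∈ (λ⁻, 0)`: `l` is negative and lies strictly above some exponent `m`
for which `∫ k(x) e^{m x} dx < ∞`. -/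
def MemIneg (k : ℝ → ℝ) (l : ℝ) : Prop :=
  l < 0 ∧ ∃ m : ℝ, m < l ∧ Integrable (fun x => k x * Real.exp (m * x))

/-- The spreading speed to the right, `c_r* = inf_{λ ∈ (0,λ⁺)} c(λ)`. -/
def cR (k : ℝ → ℝ) (f0 : ℝ) : ℝ := sInf {y | ∃ l, MemIpos k l ∧ y = cFun k f0 l}

/-- The spreading speed to the left, `c_l* = sup_{λ ∈ (λ⁻,0)} c(λ)`. -/
def cL (k : ℝ → ℝ) (f0 : ℝ) : ℝ := sSup {y | ∃ l, MemIneg k l ∧ y = cFun k f0 l}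

/-- The Fisher-KPP hypothesis (H) on the reaction term `f`, where `f0`
denotes `f'(0)` (the one-sided derivative of `f` at `0` within `[0,1]`). -/
def HypH (f : ℝ → ℝ) (f0 : ℝ) : Prop :=
  ContDiffOn ℝ 1 f (Icc 0 1) ∧ HasDerivWithinAt f f0 (Icc 0 1) 0 ∧
  f 0 = 0 ∧ f 1 = 0 ∧ 0 < f0 ∧
  (∀ u ∈ Ioo (0:ℝ) 1, 0 < f u ∧ f u ≤ f0 * u)

open ProbabilityTheory (gaussianPDFReal)
open scoped NNReal

section Reflection

variable (k : ℝ → ℝ) (f0 : ℝ)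

lemma mgf_comp_neg (l : ℝ) : Mgf (fun x => k (-x)) l = Mgf k (-l) := by
  rw [Mgf, Mgf, ← integral_neg_eq_self (fun x => k x * exp (-l * x))]
  simp only [neg_mul_neg]

lemma memIneg_iff_memIpos_comp_neg (l : ℝ) :
    MemIneg k l ↔ MemIpos (fun x => k (-x)) (-l) := by
  constructor
  · rintro ⟨hl, m, hml, hm⟩
    exact ⟨neg_pos.2 hl, -m, neg_lt_neg hml, by simpa using hm.comp_neg⟩
  · rintro ⟨hl, m, hml, hm⟩
    exact ⟨neg_pos.1 hl, -m, by linarith, by simpa using hm.comp_neg⟩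

lemma cFun_comp_neg (l : ℝ) : cFun (fun x => k (-x)) f0 (-l) = -cFun k f0 l := by
  rw [cFun, cFun, mgf_comp_neg, neg_neg, inv_neg, neg_mul]

lemma cL_eq_neg_cR_comp_neg : cL k f0 = -cR (fun x => k (-x)) f0 := by
  rw [cL, cR, ← Real.sSup_neg]
  congr 1
  ext y
  simp only [Set.mem_neg, Set.mem_ofPred_eq]
  constructor
  · rintro ⟨l, hl, rfl⟩
    exact ⟨-l, (memIneg_iff_memIpos_comp_neg k l).1 hl, (cFun_comp_neg k f0 l).symm⟩
  · rintro ⟨l, hl, hy⟩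
    refine ⟨-l, (memIneg_iff_memIpos_comp_neg k (-l)).2 (by rwa [neg_neg]), ?_⟩
    have h := cFun_comp_neg k f0 (-l)
    rw [neg_neg] at h
    linarith

end Reflection

section GaussianKernel

variable {v : ℝ≥0}

lemma gaussianPDFReal_comp_neg (μ : ℝ) :
    (fun x => gaussianPDFReal μ v (-x)) = gaussianPDFReal (-μ) v := by
  ext x
  rw [gaussianPDFReal, gaussianPDFReal]
  ring_nf

lemma integrable_gaussianPDFReal_mul_exp (hv : v ≠ 0) (μ m : ℝ) :
    Integrable (fun x => gaussianPDFReal μ v x * exp (m * x)) := by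
  have h := ProbabilityTheory.integrable_exp_mul_gaussianReal (μ := μ) (v := v) m
  rw [ProbabilityTheory.gaussianReal_of_var_ne_zero _ hv,
    integrable_withDensity_iff_integrable_smul' (ProbabilityTheory.measurable_gaussianPDF _ _)
      (ae_of_all _ fun _ => ProbabilityTheory.gaussianPDF_lt_top)] at h
  simpa only [ProbabilityTheory.toReal_gaussianPDF, smul_eq_mul] using h

lemma mgf_gaussianPDFReal (hv : v ≠ 0) (μ l : ℝ) :
    Mgf (gaussianPDFReal μ v) l = exp (μ * l + v * l ^ 2 / 2) := by
  have h := congrFun (ProbabilityTheory.mgf_id_gaussianReal (μ := μ) (v := v)) l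
  rwa [ProbabilityTheory.mgf, ProbabilityTheory.integral_gaussianReal_eq_integral_smul hv] at h

lemma memIpos_gaussianPDFReal_iff (hv : v ≠ 0) (μ l : ℝ) :
    MemIpos (gaussianPDFReal μ v) l ↔ 0 < l :=
  ⟨And.left, fun hl => ⟨hl, l + 1, lt_add_one l, integrable_gaussianPDFReal_mul_exp hv μ _⟩⟩

end GaussianKernel

/-- `c(λ)` for the Gaussian kernel of mean `μ` and variance `σ`. -/
def gaussianSpeed (σ μ f0 l : ℝ) : ℝ := l⁻¹ * (exp (μ * l + σ * l ^ 2 / 2) - 1 + f0)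

lemma cR_gaussianPDFReal {v : ℝ≥0} (hv : v ≠ 0) (μ f0 : ℝ) :
    cR (gaussianPDFReal μ v) f0 = sInf (gaussianSpeed v μ f0 '' Ioi 0) := by
  rw [cR]
  congr 1
  ext y
  simp only [memIpos_gaussianPDFReal_iff hv, cFun, mgf_gaussianPDFReal hv, Set.mem_ofPred_eq,
    Set.mem_image, Set.mem_Ioi, gaussianSpeed, eq_comm]

section GaussianSpeed

variable {σ μ f0 : ℝ}

lemma add_add_div_le_gaussianSpeed {l : ℝ} (hl : 0 < l) :
    μ + σ * l / 2 + f0 / l ≤ gaussianSpeed σ μ f0 l := by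
  rw [gaussianSpeed, inv_mul_eq_div, le_div_iff₀ hl]
  have h := add_one_le_exp (μ * l + σ * l ^ 2 / 2)
  have hf : f0 / l * l = f0 := div_mul_cancel₀ _ hl.ne'
  nlinarith

lemma add_sqrt_le_gaussianSpeed (hσ : 0 ≤ σ) (hf0 : 0 ≤ f0) {l : ℝ} (hl : 0 < l) :
    μ + √(2 * σ * f0) ≤ gaussianSpeed σ μ f0 l := by
  have hprod : σ * l / 2 * (f0 / l) = σ * f0 / 2 := by field_simp
  have amgm : √(2 * σ * f0) ≤ σ * l / 2 + f0 / l :=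
    Real.sqrt_le_iff.2 ⟨by positivity, by nlinarith [sq_nonneg (σ * l / 2 - f0 / l)]⟩
  linarith [add_add_div_le_gaussianSpeed (σ := σ) (μ := μ) (f0 := f0) hl]

lemma bddBelow_gaussianSpeed (hσ : 0 ≤ σ) (hf0 : 0 ≤ f0) :
    BddBelow (gaussianSpeed σ μ f0 '' Ioi 0) :=
  ⟨_, forall_mem_image.2 fun _ hl => add_sqrt_le_gaussianSpeed hσ hf0 hl⟩

lemma add_sqrt_le_sInf_gaussianSpeed (hσ : 0 ≤ σ) (hf0 : 0 ≤ f0) :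
    μ + √(2 * σ * f0) ≤ sInf (gaussianSpeed σ μ f0 '' Ioi 0) :=
  le_csInf (nonempty_Ioi.image _)
    (forall_mem_image.2 fun _ hl => add_sqrt_le_gaussianSpeed hσ hf0 hl)

lemma sq_div_sqrt_two_mul (hσ : 0 < σ) (μ : ℝ) : (μ / √(2 * σ)) ^ 2 = μ ^ 2 / (2 * σ) := by
  rw [div_pow, sq_sqrt (by positivity)]

lemma neg_sq_div_sqrt_le (hσ : 0 < σ) (μ l : ℝ) :
    -(μ / √(2 * σ)) ^ 2 ≤ μ * l + σ * l ^ 2 / 2 := by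
  have h : μ * l + σ * l ^ 2 / 2 + μ ^ 2 / (2 * σ) = (σ * l + μ) ^ 2 / (2 * σ) := by
    field_simp
    ring
  have : 0 ≤ (σ * l + μ) ^ 2 / (2 * σ) := by positivity
  rw [sq_div_sqrt_two_mul hσ]
  linarith

lemma gaussianSpeed_neg_div (hσ : 0 < σ) :
    gaussianSpeed σ μ f0 (-μ / σ) = (-μ / σ)⁻¹ * (exp (-(μ / √(2 * σ)) ^ 2) - 1 + f0) := by
  have h : μ * (-μ / σ) + σ * (-μ / σ) ^ 2 / 2 = -(μ ^ 2 / (2 * σ)) := by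
    field_simp
    ring
  rw [gaussianSpeed, sq_div_sqrt_two_mul hσ, h]

end GaussianSpeed

section GaussianSpeedSign

variable {σ μ f0 : ℝ}

lemma sInf_gaussianSpeed_pos_of_one_sub_lt (hσ : 0 < σ) (hf0 : 0 < f0)
    (h : 1 - f0 < exp (-(μ / √(2 * σ)) ^ 2)) : 0 < sInf (gaussianSpeed σ μ f0 '' Ioi 0) := by
  set δ := exp (-(μ / √(2 * σ)) ^ 2) - (1 - f0)
  set M := 2 * (|μ| + 1) / σ with hMdef
  have hδ : 0 < δ := by linarith
  have hM : 0 < M := by positivity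
  -- The numerator of `c(λ)` is at least `δ`, which wins for `λ ≤ M`; beyond `M` the
  -- quadratic growth of the exponent wins.
  have key : ∀ l ∈ Ioi (0 : ℝ), min (δ / M) 1 ≤ gaussianSpeed σ μ f0 l := by
    intro l (hl : 0 < l)
    rcases le_total l M with hlM | hMl
    · have hnum : δ ≤ exp (μ * l + σ * l ^ 2 / 2) - 1 + f0 := by
        linarith [exp_le_exp.2 (neg_sq_div_sqrt_le hσ μ l)]
      calc min (δ / M) 1 ≤ δ / M := min_le_left _ _
        _ ≤ δ / l := div_le_div_of_nonneg_left hδ.le hl hlM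
        _ ≤ (exp (μ * l + σ * l ^ 2 / 2) - 1 + f0) / l := by gcongr
        _ = gaussianSpeed σ μ f0 l := by rw [gaussianSpeed, inv_mul_eq_div]
    · have hσM : σ * M / 2 = |μ| + 1 := by rw [hMdef]; field_simp
      have hσl : σ * M ≤ σ * l := mul_le_mul_of_nonneg_left hMl hσ.le
      linarith [add_add_div_le_gaussianSpeed (σ := σ) (μ := μ) (f0 := f0) hl, div_pos hf0 hl,
        neg_abs_le μ, min_le_right (δ / M) 1]
  exact (lt_min (div_pos hδ hM) one_pos).trans_le
    (le_csInf (nonempty_Ioi.image _) (forall_mem_image.2 key))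

lemma sInf_gaussianSpeed_pos_of_one_le (hσ : 0 < σ) (hf1 : 1 ≤ f0) :
    0 < sInf (gaussianSpeed σ μ f0 '' Ioi 0) :=
  sInf_gaussianSpeed_pos_of_one_sub_lt hσ (by linarith)
    (by linarith [exp_pos (-(μ / √(2 * σ)) ^ 2)])

lemma sInf_gaussianSpeed_eq_zero (hσ : 0 < σ) (hf0 : 0 ≤ f0) (hμ : μ < 0)
    (h : exp (-(μ / √(2 * σ)) ^ 2) = 1 - f0) : sInf (gaussianSpeed σ μ f0 '' Ioi 0) = 0 := by
  have hvertex : 0 < -μ / σ := div_pos (neg_pos.2 hμ) hσ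
  refine le_antisymm ?_ (le_csInf (nonempty_Ioi.image _) (forall_mem_image.2 fun l hl => ?_))
  · calc sInf (gaussianSpeed σ μ f0 '' Ioi 0) ≤ gaussianSpeed σ μ f0 (-μ / σ) :=
          csInf_le (bddBelow_gaussianSpeed hσ.le hf0) (mem_image_of_mem _ hvertex)
      _ = 0 := by rw [gaussianSpeed_neg_div hσ, h]; ring
  · have hnum := exp_le_exp.2 (neg_sq_div_sqrt_le hσ μ l)
    exact mul_nonneg (inv_nonneg.2 (le_of_lt hl)) (by linarith)

lemma sInf_gaussianSpeed_neg (hσ : 0 < σ) (hf0 : 0 ≤ f0) (hμ : μ < 0)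
    (h : exp (-(μ / √(2 * σ)) ^ 2) < 1 - f0) : sInf (gaussianSpeed σ μ f0 '' Ioi 0) < 0 := by
  have hvertex : 0 < -μ / σ := div_pos (neg_pos.2 hμ) hσ
  calc sInf (gaussianSpeed σ μ f0 '' Ioi 0) ≤ gaussianSpeed σ μ f0 (-μ / σ) :=
        csInf_le (bddBelow_gaussianSpeed hσ.le hf0) (mem_image_of_mem _ hvertex)
    _ < 0 := by
      rw [gaussianSpeed_neg_div hσ]
      exact mul_neg_of_pos_of_neg (inv_pos.2 hvertex) (by linarith)

/-- The threshold `r*` on `r = μ / √(2σ)`. -/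
def criticalDrift (f0 : ℝ) : ℝ := √(-log (1 - f0))

lemma criticalDrift_pos (hf0 : 0 < f0) (hf1 : f0 < 1) : 0 < criticalDrift f0 :=
  sqrt_pos.2 (neg_pos.2 (log_neg (by linarith) (by linarith)))

lemma exp_neg_criticalDrift_sq (hf0 : 0 < f0) (hf1 : f0 < 1) :
    exp (-criticalDrift f0 ^ 2) = 1 - f0 := by
  rw [criticalDrift, sq_sqrt (neg_nonneg.2 (log_nonpos (by linarith) (by linarith))), neg_neg,
    exp_log (by linarith)]

lemma sInf_gaussianSpeed_pos_of_neg_criticalDrift_lt (hσ : 0 < σ) (hf0 : 0 < f0) (hf1 : f0 < 1)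
    (h : -criticalDrift f0 < μ / √(2 * σ)) : 0 < sInf (gaussianSpeed σ μ f0 '' Ioi 0) := by
  rcases le_or_gt 0 μ with hμ | hμ
  · exact (add_pos_of_nonneg_of_pos hμ (sqrt_pos.2 (by positivity))).trans_le
      (add_sqrt_le_sInf_gaussianSpeed hσ.le hf0.le)
  · apply sInf_gaussianSpeed_pos_of_one_sub_lt hσ hf0
    have hr : μ / √(2 * σ) < 0 := div_neg_of_neg_of_pos hμ (sqrt_pos.2 (by positivity))
    rw [← exp_neg_criticalDrift_sq hf0 hf1, exp_lt_exp, neg_lt_neg_iff]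
    exact sq_lt_sq' h (hr.trans (criticalDrift_pos hf0 hf1))

lemma sInf_gaussianSpeed_eq_zero_of_eq_neg_criticalDrift (hσ : 0 < σ) (hf0 : 0 < f0)
    (hf1 : f0 < 1) (h : μ / √(2 * σ) = -criticalDrift f0) :
    sInf (gaussianSpeed σ μ f0 '' Ioi 0) = 0 := by
  have hμ : μ < 0 :=
    neg_of_div_neg_left (h ▸ neg_neg_of_pos (criticalDrift_pos hf0 hf1)) (sqrt_nonneg _)
  apply sInf_gaussianSpeed_eq_zero hσ hf0.le hμ
  rw [h, neg_sq, exp_neg_criticalDrift_sq hf0 hf1]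

lemma sInf_gaussianSpeed_neg_of_lt_neg_criticalDrift (hσ : 0 < σ) (hf0 : 0 < f0)
    (hf1 : f0 < 1) (h : μ / √(2 * σ) < -criticalDrift f0) :
    sInf (gaussianSpeed σ μ f0 '' Ioi 0) < 0 := by
  have hμ : μ < 0 :=
    neg_of_div_neg_left (h.trans (neg_neg_of_pos (criticalDrift_pos hf0 hf1))) (sqrt_nonneg _)
  apply sInf_gaussianSpeed_neg hσ hf0.le hμ
  rw [← exp_neg_criticalDrift_sq hf0 hf1, exp_lt_exp, neg_lt_neg_iff]
  nlinarith [criticalDrift_pos hf0 hf1]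

end GaussianSpeedSign

/-- signs of the spreading speeds for the Gaussian kernel with
mean `α` and variance `σ`, in terms of `r = α/√(2σ)`: if `f'(0) ≥ 1` then
`c_l* < 0 < c_r*`; if `f'(0) < 1` there is a threshold `r* > 0` classifying
the five cases. -/
theorem signs_gaussian (σ α : ℝ) (hσ : 0 < σ) (k f : ℝ → ℝ) (f0 : ℝ)
    (hk : ∀ x : ℝ, k x =
      (Real.sqrt (2 * Real.pi * σ))⁻¹ * Real.exp (-((x - α)^2 / (2 * σ))))
    (hH : HypH f f0) :
    (1 ≤ f0 → cL k f0 < 0 ∧ 0 < cR k f0) ∧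
    (f0 < 1 → ∃ rs : ℝ, 0 < rs ∧
      (rs < α / Real.sqrt (2 * σ) → 0 < cL k f0 ∧ cL k f0 < cR k f0) ∧
      (α / Real.sqrt (2 * σ) = rs → 0 = cL k f0 ∧ cL k f0 < cR k f0) ∧
      (-rs < α / Real.sqrt (2 * σ) → α / Real.sqrt (2 * σ) < rs →
        cL k f0 < 0 ∧ 0 < cR k f0) ∧
      (α / Real.sqrt (2 * σ) = -rs → cL k f0 < cR k f0 ∧ cR k f0 = 0) ∧
      (α / Real.sqrt (2 * σ) < -rs → cL k f0 < cR k f0 ∧ cR k f0 < 0)) := by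
  obtain ⟨-, -, -, -, hf0, -⟩ := hH
  have hσ' : (σ.toNNReal : ℝ) = σ := coe_toNNReal σ hσ.le
  have hv : σ.toNNReal ≠ 0 := by simpa using hσ
  have hk' : k = gaussianPDFReal α σ.toNNReal := by
    funext x
    rw [hk, gaussianPDFReal, hσ', neg_div]
  rw [hk', cL_eq_neg_cR_comp_neg, gaussianPDFReal_comp_neg, cR_gaussianPDFReal hv,
    cR_gaussianPDFReal hv, hσ']
  have hLR : -sInf (gaussianSpeed σ (-α) f0 '' Ioi 0) < sInf (gaussianSpeed σ α f0 '' Ioi 0) := by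
    linarith [add_sqrt_le_sInf_gaussianSpeed (μ := α) hσ.le hf0.le,
      add_sqrt_le_sInf_gaussianSpeed (μ := -α) hσ.le hf0.le,
      sqrt_pos.2 (by positivity : 0 < 2 * σ * f0)]
  have hneg : -α / √(2 * σ) = -(α / √(2 * σ)) := neg_div _ _
  refine ⟨fun h1 => ?_, fun h1 => ⟨criticalDrift f0, criticalDrift_pos hf0 h1, ?_, ?_, ?_, ?_, ?_⟩⟩
  · exact ⟨neg_neg_of_pos (sInf_gaussianSpeed_pos_of_one_le hσ h1),
      sInf_gaussianSpeed_pos_of_one_le hσ h1⟩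
  · intro h
    exact ⟨neg_pos.2 (sInf_gaussianSpeed_neg_of_lt_neg_criticalDrift hσ hf0 h1 (by linarith)), hLR⟩
  · intro h
    exact ⟨by rw [sInf_gaussianSpeed_eq_zero_of_eq_neg_criticalDrift hσ hf0 h1 (by rw [hneg, h]),
      neg_zero], hLR⟩
  · intro h h'
    exact ⟨neg_neg_of_pos (sInf_gaussianSpeed_pos_of_neg_criticalDrift_lt hσ hf0 h1 (by linarith)),
      sInf_gaussianSpeed_pos_of_neg_criticalDrift_lt hσ hf0 h1 h⟩
  · intro h
    exact ⟨hLR, sInf_gaussianSpeed_eq_zero_of_eq_neg_criticalDrift hσ hf0 h1 h⟩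
  · intro h
    exact ⟨hLR, sInf_gaussianSpeed_neg_of_lt_neg_criticalDrift hσ hf0 h1 h⟩
end
end

section
/- Define ω(x) = (x−1)eˣ for x ∈ ℝ. For every θ > 0 with θ ≠ 1, the equation ω(z) = ω(−θz), i.e. (z−1)e^z + (θz+1)e^{−θz} = 0, has a unique nonzero real solution z(θ); setting z(1) = 0, the resulting function z : (0,∞) → (−∞,1) is continuous and strictly increasing, and it satisfies z(θ) ∈ (1 − 1/θ, 1) for θ > 1 and z(θ) ∈ (−1/θ, 1 − 1/θ) for 0 < θ < 1. -/
/-!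
Write `Φ θ w = ω w - ω (-θ w)`. For `w ≠ 0`, `∂Φ/∂θ = -θ w² e^{-θw} < 0`, while
`∂Φ/∂w = w (e^w - θ² e^{-θw})` vanishes only at `0` and at `c = 2 log θ / (1 + θ)`.
For `θ > 1` this makes `Φ θ` negative on `(-∞, c] \ {0}` (comparing with the odd function `Φ 1`)
and strictly increasing on `[c, ∞)`, so away from `0` it changes sign exactly once, at a point
of `(1 - 1/θ, 1)` by the intermediate value theorem. The identity `Φ θ⁻¹ (-θ w) = -Φ θ w`
carries this over to `θ < 1`, and `z θ` is the sign-change point. Since the sign of `Φ θ w`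
tells on which side of `w` the root lies, monotonicity of `Φ` in `θ` makes `z` strictly
increasing, and continuity of `Φ` in `θ` makes `z` continuous.
-/

open Real Filter Set Topology

noncomputable section

-- The value at `w = 0` is ignored: `0` solves every equation `Φ θ w = 0` considered below.
def IsSignChange (f : ℝ → ℝ) (r : ℝ) : Prop :=
  ∀ w ≠ 0, SignType.sign (f w) = SignType.sign (w - r)

theorem exists_ne_zero_mem_Ioo {a b : ℝ} (h : a < b) : ∃ w ≠ 0, w ∈ Ioo a b := by
  obtain ⟨w, hw, hw0⟩ := ((Ioo_infinite h).sdiff (finite_singleton 0)).nonempty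
  exact ⟨w, hw0, hw⟩

namespace IsSignChange

variable {f g : ℝ → ℝ} {r s w : ℝ}

theorem of_neg_of_pos (hr : f r = 0) (hlt : ∀ w ≠ 0, w < r → f w < 0)
    (hgt : ∀ w ≠ 0, r < w → 0 < f w) : IsSignChange f r := by
  intro w hw
  rcases lt_trichotomy w r with h | rfl | h
  · rw [sign_neg (hlt w hw h), sign_neg (sub_neg.2 h)]
  · rw [hr, sub_self]
  · rw [sign_pos (hgt w hw h), sign_pos (sub_pos.2 h)]

theorem neg_iff (h : IsSignChange f r) (hw : w ≠ 0) : f w < 0 ↔ w < r := by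
  rw [← sign_eq_neg_one_iff, h w hw, sign_eq_neg_one_iff, sub_neg]

theorem pos_iff (h : IsSignChange f r) (hw : w ≠ 0) : 0 < f w ↔ r < w := by
  rw [← sign_eq_one_iff, h w hw, sign_eq_one_iff, sub_pos]

theorem eq_of_apply_eq_zero (h : IsSignChange f r) (hw : w ≠ 0) (hf : f w = 0) : w = r := by
  have := h w hw
  rwa [hf, _root_.sign_zero, eq_comm, _root_.sign_eq_zero_iff, sub_eq_zero] at this

theorem apply_eq_zero (h : IsSignChange f r) (hr : r ≠ 0) : f r = 0 := by
  simpa [sign_eq_zero_iff] using h r hr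

theorem unique (hr : IsSignChange f r) (hs : IsSignChange f s) : r = s := by
  by_contra hne
  wlog hlt : r < s generalizing r s
  · exact this hs hr (Ne.symm hne) ((not_lt.1 hlt).lt_of_ne (Ne.symm hne))
  obtain ⟨w, hw, hrw, hws⟩ := exists_ne_zero_mem_Ioo hlt
  exact lt_asymm ((hr.pos_iff hw).2 hrw) ((hs.neg_iff hw).2 hws)

theorem lt_of_forall_lt (hf : IsSignChange f r) (hg : IsSignChange g s) (hgf : ∀ w ≠ 0, g w < f w)
    (h0 : r ≠ 0 ∨ s ≠ 0) : r < s := by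
  rcases h0 with hr | hs
  · exact (hg.neg_iff hr).1 (hf.apply_eq_zero hr ▸ hgf r hr)
  · exact (hf.pos_iff hs).1 (hg.apply_eq_zero hs ▸ hgf s hs)

theorem neg_comp_neg_inv_mul {a : ℝ} (h : IsSignChange f r) (ha : 0 < a) :
    IsSignChange (fun u ↦ -f (-(a⁻¹ * u))) (-(a * r)) := by
  intro u hu
  have hu' : -(a⁻¹ * u) ≠ 0 := by simp [ha.ne', hu]
  rw [Left.sign_neg, h _ hu', ← Left.sign_neg,
    show -(-(a⁻¹ * u) - r) = a⁻¹ * (u - -(a * r)) by field_simp; ring,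
    sign_mul, sign_pos (inv_pos.2 ha), one_mul]

end IsSignChange

section Parametric

variable {f : ℝ → ℝ → ℝ} {r : ℝ → ℝ} {s : Set ℝ}

theorem continuousOn_of_isSignChange (hs : IsOpen s) (hf : ∀ w, Continuous (f · w))
    (hr : ∀ θ ∈ s, IsSignChange (f θ) (r θ)) : ContinuousOn r s := by
  intro θ₀ hθ₀
  refine ContinuousAt.continuousWithinAt (tendsto_order.2 ⟨fun a ha ↦ ?_, fun b hb ↦ ?_⟩)
  · obtain ⟨w, hw, haw, hwr⟩ := exists_ne_zero_mem_Ioo ha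
    have hneg : ∀ᶠ θ in 𝓝 θ₀, f θ w < 0 :=
      ((hf w).tendsto θ₀).eventually_lt_const (((hr θ₀ hθ₀).neg_iff hw).2 hwr)
    filter_upwards [hneg, hs.mem_nhds hθ₀] with θ hθw hθ
    exact haw.trans (((hr θ hθ).neg_iff hw).1 hθw)
  · obtain ⟨w, hw, hrw, hwb⟩ := exists_ne_zero_mem_Ioo hb
    have hpos : ∀ᶠ θ in 𝓝 θ₀, 0 < f θ w :=
      ((hf w).tendsto θ₀).eventually_const_lt (((hr θ₀ hθ₀).pos_iff hw).2 hrw)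
    filter_upwards [hpos, hs.mem_nhds hθ₀] with θ hθw hθ
    exact (((hr θ hθ).pos_iff hw).1 hθw).trans hwb

theorem strictMonoOn_of_isSignChange (hf : ∀ w ≠ 0, StrictAntiOn (f · w) s)
    (hr : ∀ θ ∈ s, IsSignChange (f θ) (r θ)) (hr0 : {θ ∈ s | r θ = 0}.Subsingleton) :
    StrictMonoOn r s := by
  intro θ₁ h₁ θ₂ h₂ hlt
  refine (hr θ₁ h₁).lt_of_forall_lt (hr θ₂ h₂) (fun w hw ↦ hf w hw h₁ h₂ hlt) ?_
  by_contra! h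
  exact hlt.ne (hr0 ⟨h₁, h.1⟩ ⟨h₂, h.2⟩)

end Parametric

namespace ImplicitZ

def ω (x : ℝ) : ℝ := (x - 1) * exp x

def Φ (θ w : ℝ) : ℝ := ω w - ω (-(θ * w))

variable {θ w : ℝ}

theorem Φ_eq (θ w : ℝ) : Φ θ w = (w - 1) * exp w + (θ * w + 1) * exp (-(θ * w)) := by
  unfold Φ ω; ring

theorem Φ_zero_right (θ : ℝ) : Φ θ 0 = 0 := by
  simp [Φ]

theorem Φ_inv (hθ : θ ≠ 0) (w : ℝ) : Φ θ⁻¹ w = -Φ θ (-(θ⁻¹ * w)) := by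
  rw [Φ, Φ, mul_neg, neg_neg, mul_inv_cancel_left₀ hθ]; ring

theorem continuous_Φ (θ : ℝ) : Continuous (Φ θ) := by
  unfold Φ ω; fun_prop

theorem continuous_Φ_param (w : ℝ) : Continuous (Φ · w) := by
  unfold Φ ω; fun_prop

theorem hasDerivAt_ω (x : ℝ) : HasDerivAt ω (x * exp x) x :=
  (((hasDerivAt_id x).sub_const 1).mul (hasDerivAt_exp x)).congr_deriv (by simp only [id_eq]; ring)

theorem hasDerivAt_Φ (θ w : ℝ) :
    HasDerivAt (Φ θ) (w * (exp w - θ ^ 2 * exp (-(θ * w)))) w :=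
  ((hasDerivAt_ω w).sub ((hasDerivAt_ω _).comp w ((hasDerivAt_id w).const_mul θ).neg))
    |>.congr_deriv (by simp only [id_eq, Pi.neg_apply]; ring)

theorem hasDerivAt_Φ_param (θ w : ℝ) :
    HasDerivAt (Φ · w) (-(θ * w ^ 2 * exp (-(θ * w)))) θ :=
  ((hasDerivAt_const θ (ω w)).sub ((hasDerivAt_ω _).comp θ ((hasDerivAt_id θ).mul_const w).neg))
    |>.congr_deriv (by simp only [id_eq, Pi.neg_apply]; ring)

theorem Φ_strictAntiOn_param (hw : w ≠ 0) : StrictAntiOn (Φ · w) (Ici 0) := by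
  refine strictAntiOn_of_deriv_neg (convex_Ici 0) (continuous_Φ_param w).continuousOn ?_
  intro θ hθ
  rw [interior_Ici] at hθ
  rw [(hasDerivAt_Φ_param θ w).deriv, neg_lt_zero]
  have : (0 : ℝ) < θ := hθ
  positivity

theorem sq_mul_exp_neg_mul (hθ : 0 < θ) :
    θ ^ 2 * exp (-(θ * w)) = exp (2 * log θ - θ * w) := by
  have h2 : 2 * log θ = log (θ ^ 2) := by rw [log_pow]; norm_num
  rw [sub_eq_add_neg, exp_add, h2, exp_log (by positivity)]

theorem sq_mul_exp_lt_exp_iff (hθ : 0 < θ) :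
    θ ^ 2 * exp (-(θ * w)) < exp w ↔ 2 * log θ / (1 + θ) < w := by
  rw [sq_mul_exp_neg_mul hθ, exp_lt_exp, div_lt_iff₀ (by linarith)]
  constructor <;> intro <;> linarith

theorem exp_lt_sq_mul_exp_iff (hθ : 0 < θ) :
    exp w < θ ^ 2 * exp (-(θ * w)) ↔ w < 2 * log θ / (1 + θ) := by
  rw [sq_mul_exp_neg_mul hθ, exp_lt_exp, lt_div_iff₀ (by linarith)]
  constructor <;> intro <;> linarith

theorem Φ_strictAntiOn (hθ : 0 < θ) : StrictAntiOn (Φ θ) (Icc 0 (2 * log θ / (1 + θ))) := by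
  refine strictAntiOn_of_deriv_neg (convex_Icc _ _) (continuous_Φ θ).continuousOn ?_
  intro w hw
  rw [interior_Icc] at hw
  rw [(hasDerivAt_Φ θ w).deriv]
  exact mul_neg_of_pos_of_neg hw.1 (sub_neg.2 ((exp_lt_sq_mul_exp_iff hθ).2 hw.2))

theorem Φ_strictMonoOn (hθ : 1 ≤ θ) : StrictMonoOn (Φ θ) (Ici (2 * log θ / (1 + θ))) := by
  refine strictMonoOn_of_deriv_pos (convex_Ici _) (continuous_Φ θ).continuousOn ?_
  intro w hw
  rw [interior_Ici] at hw
  rw [(hasDerivAt_Φ θ w).deriv]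
  have hc : 0 ≤ 2 * log θ / (1 + θ) := div_nonneg (by linarith [log_nonneg hθ]) (by linarith)
  exact mul_pos (hc.trans_lt hw) (sub_pos.2 ((sq_mul_exp_lt_exp_iff (by linarith)).2 hw))

theorem isSignChange_Φ_one : IsSignChange (Φ 1) 0 := by
  have hpos : ∀ w, 0 < w → 0 < Φ 1 w := fun w hw ↦ by
    simpa [Φ_zero_right] using Φ_strictMonoOn le_rfl (a := 0) (by simp) (by simp [hw.le]) hw
  refine .of_neg_of_pos (Φ_zero_right 1) (fun w _ hw ↦ ?_) (fun w _ hw ↦ hpos w hw)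
  have := Φ_inv one_ne_zero w
  rw [inv_one, one_mul] at this
  linarith [hpos (-w) (neg_pos.2 hw)]

theorem isSignChange_Φ_inv (hθ : 0 < θ) {r : ℝ} (h : IsSignChange (Φ θ) r) :
    IsSignChange (Φ θ⁻¹) (-(θ * r)) := by
  convert h.neg_comp_neg_inv_mul hθ using 1
  exact funext (Φ_inv hθ.ne')

theorem Φ_neg_of_neg (hθ : 1 ≤ θ) (hw : w < 0) : Φ θ w < 0 :=
  ((Φ_strictAntiOn_param hw.ne).antitoneOn (mem_Ici.2 zero_le_one) (mem_Ici.2 (by linarith))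
    hθ).trans_lt ((isSignChange_Φ_one.neg_iff hw.ne).2 hw)

theorem Φ_neg_of_le (hθ : 1 ≤ θ) (hw : w ≠ 0) (hwc : w ≤ 2 * log θ / (1 + θ)) : Φ θ w < 0 := by
  rcases hw.lt_or_gt with hw | hw
  · exact Φ_neg_of_neg hθ hw
  · simpa [Φ_zero_right] using
      Φ_strictAntiOn (by linarith) ⟨le_rfl, hw.le.trans hwc⟩ ⟨hw.le, hwc⟩ hw

theorem Φ_one_right_pos (hθ : 0 < θ) : 0 < Φ θ 1 := by
  rw [Φ_eq]; simp only [sub_self, zero_mul, zero_add, mul_one]; positivity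

/-- With `θ = exp t` this is `t < sinh t`. -/
theorem Φ_one_sub_inv_neg (hθ : 1 < θ) : Φ θ (1 - 1 / θ) < 0 := by
  have h0 : 0 < θ := by linarith
  have hlog : 2 * log θ < θ - θ⁻¹ := by
    have := self_lt_sinh_iff.2 (log_pos hθ)
    rw [sinh_log h0] at this
    linarith
  have hlt : θ ^ 2 * exp (-(θ * (1 - 1 / θ))) < exp (1 - 1 / θ) := by
    rw [sq_mul_exp_neg_mul h0, exp_lt_exp, mul_one_sub, mul_one_div_cancel h0.ne', one_div]
    linarith
  have hΦ : Φ θ (1 - 1 / θ) = θ⁻¹ * (θ ^ 2 * exp (-(θ * (1 - 1 / θ))) - exp (1 - 1 / θ)) := by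
    rw [Φ_eq, mul_one_sub, mul_one_div_cancel h0.ne']
    field_simp
    ring
  rw [hΦ]
  exact mul_neg_of_pos_of_neg (inv_pos.2 h0) (sub_neg.2 hlt)

theorem exists_isSignChange_Φ_of_one_lt (hθ : 1 < θ) :
    ∃ r ∈ Ioo (1 - 1 / θ) 1, IsSignChange (Φ θ) r := by
  set c := 2 * log θ / (1 + θ)
  have hlow : 0 < 1 - 1 / θ := by
    rw [sub_pos, div_lt_one (by linarith)]; exact hθ
  obtain ⟨r, hr, hr0⟩ := intermediate_value_Ioo (sub_le_self _ (by positivity))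
    (continuous_Φ θ).continuousOn (show (0 : ℝ) ∈ Ioo (Φ θ (1 - 1 / θ)) (Φ θ 1) from
      ⟨Φ_one_sub_inv_neg hθ, Φ_one_right_pos (by linarith)⟩)
  have hrpos : 0 < r := hlow.trans hr.1
  have hcr : c < r := by
    by_contra! h
    exact (Φ_neg_of_le hθ.le hrpos.ne' h).ne hr0
  refine ⟨r, hr, .of_neg_of_pos hr0 (fun w hw hwr ↦ ?_) (fun w _ hrw ↦ ?_)⟩
  · rcases le_or_gt w c with hwc | hwc
    · exact Φ_neg_of_le hθ.le hw hwc
    · exact hr0 ▸ Φ_strictMonoOn hθ.le hwc.le hcr.le hwr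
  · exact hr0 ▸ Φ_strictMonoOn hθ.le hcr.le (hcr.trans hrw).le hrw

theorem exists_isSignChange_Φ_of_lt_one (h0 : 0 < θ) (h1 : θ < 1) :
    ∃ r ∈ Ioo (-1 / θ) (1 - 1 / θ), IsSignChange (Φ θ) r := by
  obtain ⟨r, ⟨hr₁, hr₂⟩, hr⟩ := exists_isSignChange_Φ_of_one_lt ((one_lt_inv₀ h0).2 h1)
  refine ⟨-(θ⁻¹ * r), ⟨?_, ?_⟩, by simpa using isSignChange_Φ_inv (inv_pos.2 h0) hr⟩
  · rw [neg_div, one_div, neg_lt_neg_iff]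
    exact (mul_lt_iff_lt_one_right (inv_pos.2 h0)).2 hr₂
  · rw [one_div, inv_inv] at hr₁
    have key : θ⁻¹ * (1 - r) < 1 := (inv_mul_lt_iff₀ h0).2 (by linarith)
    linarith [mul_one_sub θ⁻¹ r, one_div θ]

theorem exists_isSignChange_Φ (hθ : 0 < θ) : ∃ r, IsSignChange (Φ θ) r := by
  rcases lt_trichotomy θ 1 with h | rfl | h
  · exact (exists_isSignChange_Φ_of_lt_one hθ h).imp fun _ h ↦ h.2
  · exact ⟨0, isSignChange_Φ_one⟩
  · exact (exists_isSignChange_Φ_of_one_lt h).imp fun _ h ↦ h.2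

def z (θ : ℝ) : ℝ := if h : 0 < θ then (exists_isSignChange_Φ h).choose else 0

theorem isSignChange_z (hθ : 0 < θ) : IsSignChange (Φ θ) (z θ) := by
  rw [z, dif_pos hθ]; exact (exists_isSignChange_Φ hθ).choose_spec

theorem z_one : z 1 = 0 :=
  (isSignChange_z one_pos).unique isSignChange_Φ_one

theorem z_mem_Ioo_of_one_lt (hθ : 1 < θ) : z θ ∈ Ioo (1 - 1 / θ) 1 := by
  obtain ⟨r, hr, hsc⟩ := exists_isSignChange_Φ_of_one_lt hθ
  rwa [(isSignChange_z (by linarith)).unique hsc]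

theorem z_mem_Ioo_of_lt_one (h0 : 0 < θ) (h1 : θ < 1) : z θ ∈ Ioo (-1 / θ) (1 - 1 / θ) := by
  obtain ⟨r, hr, hsc⟩ := exists_isSignChange_Φ_of_lt_one h0 h1
  rwa [(isSignChange_z h0).unique hsc]

theorem z_ne_zero (h0 : 0 < θ) (h1 : θ ≠ 1) : z θ ≠ 0 := by
  rcases h1.lt_or_gt with h1 | h1
  · refine ((z_mem_Ioo_of_lt_one h0 h1).2.trans_le ?_).ne
    rw [sub_nonpos, le_div_iff₀ h0]; linarith
  · refine (lt_of_le_of_lt ?_ (z_mem_Ioo_of_one_lt h1).1).ne'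
    rw [sub_nonneg, div_le_one h0]; exact h1.le

theorem z_lt_one (hθ : 0 < θ) : z θ < 1 := by
  rcases lt_trichotomy θ 1 with h1 | rfl | h1
  · exact (z_mem_Ioo_of_lt_one hθ h1).2.trans (sub_lt_self _ (by positivity))
  · rw [z_one]; exact one_pos
  · exact (z_mem_Ioo_of_one_lt h1).2

theorem continuousOn_z : ContinuousOn z (Ioi 0) :=
  continuousOn_of_isSignChange isOpen_Ioi continuous_Φ_param fun _ ↦ isSignChange_z

theorem strictMonoOn_z : StrictMonoOn z (Ioi 0) := by
  refine strictMonoOn_of_isSignChange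
    (fun w hw ↦ (Φ_strictAntiOn_param hw).mono Ioi_subset_Ici_self) (fun _ ↦ isSignChange_z) ?_
  refine (subsingleton_singleton (a := (1 : ℝ))).anti fun θ ⟨hθ, hz⟩ ↦ ?_
  by_contra h1
  exact z_ne_zero hθ h1 hz

end ImplicitZ

/-- there is a (unique nonzero-solution-selecting) function
`z : (0,∞) → (-∞,1)` with `z(1) = 0` such that for `θ ≠ 1`, `z(θ)` is the
unique nonzero solution of `(z-1)e^z + (θz+1)e^{-θz} = 0`; this function is
continuous and strictly increasing, with `z(θ) ∈ (1 - 1/θ, 1)` for `θ > 1`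
and `z(θ) ∈ (-1/θ, 1 - 1/θ)` for `0 < θ < 1`. -/
theorem implicit_function_z :
    ∃ z : ℝ → ℝ,
      z 1 = 0 ∧
      (∀ θ : ℝ, 0 < θ → z θ < 1) ∧
      (∀ θ : ℝ, 0 < θ → θ ≠ 1 →
        z θ ≠ 0 ∧
        (z θ - 1) * Real.exp (z θ) + (θ * z θ + 1) * Real.exp (-(θ * z θ)) = 0 ∧
        (∀ w : ℝ, w ≠ 0 →
          (w - 1) * Real.exp w + (θ * w + 1) * Real.exp (-(θ * w)) = 0 →
          w = z θ)) ∧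
      ContinuousOn z (Ioi 0) ∧
      StrictMonoOn z (Ioi 0) ∧
      (∀ θ : ℝ, 1 < θ → z θ ∈ Ioo (1 - 1/θ) 1) ∧
      (∀ θ : ℝ, 0 < θ → θ < 1 → z θ ∈ Ioo (-1/θ) (1 - 1/θ)) := by
  open ImplicitZ in
  exact ⟨z, z_one, fun θ ↦ z_lt_one, fun θ hθ h1 ↦
    ⟨z_ne_zero hθ h1, Φ_eq θ (z θ) ▸ (isSignChange_z hθ).apply_eq_zero (z_ne_zero hθ h1),
      fun w hw hroot ↦ (isSignChange_z hθ).eq_of_apply_eq_zero hw (Φ_eq θ w ▸ hroot)⟩,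
    continuousOn_z, strictMonoOn_z, fun θ ↦ z_mem_Ioo_of_one_lt, fun θ ↦ z_mem_Ioo_of_lt_one⟩
end
end

section
/- Let z : (0,∞) → (−∞,1) be as in the implicit-function lemma: z(1)=0 and for θ ≠ 1, z(θ) is the unique nonzero real solution of (z−1)e^z + (θz+1)e^{−θz} = 0. Define q(θ) = 1 − e^{z(θ)}/(1 + θ·z(θ)) for θ ≥ 1. Then q(1) = 0, q is strictly increasing on [1,∞), q(θ) → 1 as θ → +∞, and consequently for every s ∈ (0,1) there exists a unique θ* > 1 with q(θ*) = s. -/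
open Real Filter Set Topology

/-!
Put `t = θ * z θ`. For `θ ≥ 1` the defining equation says that `(z, t)` lies on the curve
`(1 + t) * exp (-t) = (1 - z) * exp z` with `0 ≤ z < 1`, `0 ≤ t`, and `q = 1 - exp z / (1 + t)`.
Since `z` increases with `θ`, monotonicity of `q` amounts to `exp z / (1 + t)` decreasing along
that curve as `z` grows; the key input is `(1 - z) * (1 + t) ≤ 1` on the curve. The limit holds because `z θ ≥ z 2 > 0` makes `1 + θ * z θ` grow linearly, and
the last claim is the intermediate value theorem for the continuous, strictly increasing `q`.
-/

lemma strictAntiOn_one_sub_mul_exp : StrictAntiOn (fun x : ℝ => (1 - x) * exp x) (Ici 0) := by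
  refine strictAntiOn_of_hasDerivWithinAt_neg (convex_Ici 0) (by fun_prop)
    (f' := fun x => -x * exp x) (fun x _ => ?_) (fun x hx => ?_)
  · exact (((hasDerivAt_id x).const_sub 1).mul (hasDerivAt_exp x)).hasDerivWithinAt.congr_deriv
      (by simp; ring)
  · rw [interior_Ici] at hx
    exact mul_neg_of_neg_of_pos (neg_neg_of_pos hx) (exp_pos x)

lemma strictAntiOn_one_add_mul_exp_neg :
    StrictAntiOn (fun x : ℝ => (1 + x) * exp (-x)) (Ici 0) := by
  refine strictAntiOn_of_hasDerivWithinAt_neg (convex_Ici 0) (by fun_prop)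
    (f' := fun x => -x * exp (-x)) (fun x _ => ?_) (fun x hx => ?_)
  · exact (((hasDerivAt_id x).const_add 1).mul (hasDerivAt_neg x).exp).hasDerivWithinAt.congr_deriv
      (by simp; ring)
  · rw [interior_Ici] at hx
    exact mul_neg_of_neg_of_pos (neg_neg_of_pos hx) (exp_pos _)

/-- Writing `1 - z = exp (-s)`, the comparison with the solution `t = exp s - 1` of
`(1 - z) * (1 + t) = 1` is the inequality `s ≤ sinh s`. -/
lemma one_sub_mul_one_add_le_one {z t : ℝ} (hz₀ : 0 ≤ z) (hz₁ : z < 1) (ht : 0 ≤ t)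
    (h : (1 + t) * exp (-t) = (1 - z) * exp z) : (1 - z) * (1 + t) ≤ 1 := by
  obtain ⟨s, hs, rfl⟩ : ∃ s, 0 ≤ s ∧ z = 1 - exp (-s) :=
    ⟨-log (1 - z), neg_nonneg.2 (log_nonpos (by linarith) (by linarith)),
      by rw [neg_neg, exp_log (by linarith)]; ring⟩
  have hu : 0 ≤ exp s - 1 := sub_nonneg.2 (one_le_exp hs)
  have hφ : (1 + (exp s - 1)) * exp (-(exp s - 1)) ≤ (1 + t) * exp (-t) := by
    rw [h, sub_sub_cancel, add_sub_cancel, ← exp_add, ← exp_add, exp_le_exp]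
    linarith [self_le_sinh_iff.2 hs, sinh_eq s]
  have htu : t ≤ exp s - 1 := (strictAntiOn_one_add_mul_exp_neg.le_iff_ge hu ht).1 hφ
  calc (1 - (1 - exp (-s))) * (1 + t) ≤ exp (-s) * exp s := by
        rw [sub_sub_cancel]; gcongr; linarith
    _ = 1 := by rw [← exp_add, neg_add_cancel, exp_zero]

lemma strictAntiOn_exp_div_add_log_one_sub {a c : ℝ} (ha : 0 ≤ a) (hc : (1 - a) * exp a ≤ c) :
    StrictAntiOn (fun x => exp x / c + log (1 - x)) (Ico a 1) := by
  refine strictAntiOn_of_hasDerivWithinAt_neg (convex_Ico a 1)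
    (f' := fun x => exp x / c - 1 / (1 - x))
    ((by fun_prop : Continuous fun x => exp x / c).continuousOn.add
      (ContinuousOn.log (by fun_prop) fun x hx => (sub_pos.2 hx.2).ne'))
    (fun x hx => ?_) (fun x hx => ?_) <;> rw [interior_Ico] at hx
  · exact (((hasDerivAt_exp x).div_const c).add
      (((hasDerivAt_id x).const_sub 1).log (sub_pos.2 hx.2).ne')).hasDerivWithinAt.congr_deriv
      (by simp; ring)
  · have hψ : (1 - x) * exp x < c :=
      (strictAntiOn_one_sub_mul_exp ha (ha.trans hx.1.le) hx.1).trans_le hc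
    have hc₀ : 0 < c := (mul_pos (sub_pos.2 hx.2) (exp_pos x)).trans hψ
    rw [sub_neg, div_lt_div_iff₀ hc₀ (sub_pos.2 hx.2)]
    linarith

lemma antitoneOn_div_add_log (A : ℝ) : AntitoneOn (fun c => A / c + log c) (Ioc 0 A) := by
  intro c₁ h₁ c₂ h₂ hc
  have hlog := log_le_sub_one_of_pos (div_pos h₂.1 h₁.1)
  rw [log_div h₂.1.ne' h₁.1.ne'] at hlog
  have hgap : A / c₁ - A / c₂ - (c₂ / c₁ - 1) = (c₂ - c₁) * (A - c₂) / (c₁ * c₂) := by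
    field_simp [h₁.1.ne', h₂.1.ne']
  have : 0 ≤ (c₂ - c₁) * (A - c₂) / (c₁ * c₂) :=
    div_nonneg (mul_nonneg (sub_nonneg.2 hc) (sub_nonneg.2 h₂.2)) (mul_pos h₁.1 h₂.1).le
  show A / c₂ + log c₂ ≤ A / c₁ + log c₁
  linarith

lemma exp_div_add_log_add_log_one_sub_eq_one {z t : ℝ} (hz : z < 1) (ht : 0 ≤ t)
    (h : (1 + t) * exp (-t) = (1 - z) * exp z) :
    exp z / (exp z / (1 + t)) + log (exp z / (1 + t)) + log (1 - z) = 1 := by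
  have hlog := congrArg log h
  rw [log_mul (by linarith) (exp_ne_zero _), log_mul (by linarith) (exp_ne_zero _),
    log_exp, log_exp] at hlog
  rw [div_div_cancel₀ (exp_ne_zero _), log_div (exp_ne_zero _) (by linarith), log_exp]
  linarith

/-- On the curve `(1 + t) * exp (-t) = (1 - z) * exp z`, the quantity `c = exp z / (1 + t)` is a
level of `Φ z c = exp z / c + log c + log (1 - z)`. Moving `z` up at fixed `c₁` lowers `Φ`, and
`Φ z₂` is antitone in `c` up to `exp z₂`, so the level `1` is reached at some `c₂ < c₁`. -/
lemma exp_div_one_add_lt_of_lt {z₁ z₂ t₁ t₂ : ℝ} (hz₁ : 0 ≤ z₁) (hz : z₁ < z₂) (hz₂ : z₂ < 1)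
    (ht₁ : 0 ≤ t₁) (ht₂ : 0 ≤ t₂)
    (h₁ : (1 + t₁) * exp (-t₁) = (1 - z₁) * exp z₁)
    (h₂ : (1 + t₂) * exp (-t₂) = (1 - z₂) * exp z₂) :
    exp z₂ / (1 + t₂) < exp z₁ / (1 + t₁) := by
  have hlevel₁ := exp_div_add_log_add_log_one_sub_eq_one (hz.trans hz₂) ht₁ h₁
  have hlevel₂ := exp_div_add_log_add_log_one_sub_eq_one hz₂ ht₂ h₂
  set c₁ := exp z₁ / (1 + t₁)
  set c₂ := exp z₂ / (1 + t₂)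
  have hc₁ : 0 < c₁ := div_pos (exp_pos _) (by linarith)
  have hc₂ : 0 < c₂ := div_pos (exp_pos _) (by linarith)
  have hc₂le : c₂ ≤ exp z₂ := div_le_self (exp_pos _).le (by linarith)
  have hψc₁ : (1 - z₁) * exp z₁ ≤ c₁ := by
    rw [le_div_iff₀ (by linarith)]
    nlinarith [one_sub_mul_one_add_le_one hz₁ (hz.trans hz₂) ht₁ h₁, exp_pos z₁]
  have hstep : exp z₂ / c₁ + log (1 - z₂) < exp z₁ / c₁ + log (1 - z₁) :=
    strictAntiOn_exp_div_add_log_one_sub hz₁ hψc₁ ⟨le_rfl, hz.trans hz₂⟩ ⟨hz.le, hz₂⟩ hz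
  by_contra! hle
  have := antitoneOn_div_add_log (exp z₂) ⟨hc₁, hle.trans hc₂le⟩ ⟨hc₂, hc₂le⟩ hle
  linarith

lemma tendsto_exp_div_one_add_mul_atTop {z : ℝ → ℝ} {m M : ℝ} (hm : 0 < m)
    (hzm : ∀ᶠ θ in atTop, m ≤ z θ) (hzM : ∀ᶠ θ in atTop, z θ ≤ M) :
    Tendsto (fun θ => exp (z θ) / (1 + θ * z θ)) atTop (𝓝 0) := by
  have hbound : Tendsto (fun θ => exp M / (1 + θ * m)) atTop (𝓝 0) :=
    tendsto_const_nhds.div_atTop (tendsto_atTop_add_const_left _ _ (tendsto_id.atTop_mul_const hm))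
  refine tendsto_of_tendsto_of_tendsto_of_le_of_le' tendsto_const_nhds hbound ?_ ?_
  · filter_upwards [hzm, eventually_ge_atTop 0] with θ h hθ
    have := hm.le.trans h
    positivity
  · filter_upwards [hzm, hzM, eventually_ge_atTop 0] with θ h h' hθ
    have := hm.le.trans h
    gcongr

lemma StrictMonoOn.existsUnique_eq_of_tendsto_atTop {f : ℝ → ℝ} {a b s : ℝ}
    (hmono : StrictMonoOn f (Ici a)) (hcont : ContinuousOn f (Ici a))
    (hlim : Tendsto f atTop (𝓝 b)) (hs : s ∈ Ioo (f a) b) : ∃! x, a < x ∧ f x = s := by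
  obtain ⟨M, hM, haM⟩ :=
    ((hlim.eventually (eventually_gt_nhds hs.2)).and (eventually_ge_atTop a)).exists
  obtain ⟨x, hx, rfl⟩ := intermediate_value_Ioo haM (hcont.mono Icc_subset_Ici_self) ⟨hs.1, hM⟩
  exact ⟨x, ⟨hx.1, rfl⟩, fun y hy => hmono.injOn hy.1.le hx.1.le hy.2⟩

/-- with `z` the implicit function of the lemma (the unique
nonzero solution of `(z-1)e^z + (θz+1)e^{-θz} = 0` for `θ ≠ 1`, and
`z(1) = 0`), the function `q(θ) = 1 - e^{z(θ)}/(1 + θ z(θ))` satisfies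
`q(1) = 0`, is strictly increasing on `[1,∞)`, tends to `1` at `+∞`, and
hence takes every value `s ∈ (0,1)` exactly once on `(1,∞)`. -/
theorem q_properties (z : ℝ → ℝ)
    (hz1 : z 1 = 0)
    (hzlt : ∀ θ : ℝ, 0 < θ → z θ < 1)
    (hzeq : ∀ θ : ℝ, 0 < θ → θ ≠ 1 →
      z θ ≠ 0 ∧
      (z θ - 1) * Real.exp (z θ) + (θ * z θ + 1) * Real.exp (-(θ * z θ)) = 0)
    (hzc : ContinuousOn z (Ioi 0))
    (hzm : StrictMonoOn z (Ioi 0)) :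
    (1 - Real.exp (z 1) / (1 + 1 * z 1)) = 0 ∧
    StrictMonoOn (fun θ : ℝ => 1 - Real.exp (z θ) / (1 + θ * z θ)) (Ici 1) ∧
    Tendsto (fun θ : ℝ => 1 - Real.exp (z θ) / (1 + θ * z θ)) atTop (𝓝 1) ∧
    (∀ s ∈ Ioo (0:ℝ) 1, ∃! θ : ℝ,
      1 < θ ∧ 1 - Real.exp (z θ) / (1 + θ * z θ) = s) := by
  have hz_nonneg : ∀ θ, 1 ≤ θ → 0 ≤ z θ := fun θ hθ =>
    hz1 ▸ hzm.monotoneOn (mem_Ioi.2 one_pos) (mem_Ioi.2 (one_pos.trans_le hθ)) hθ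
  have hcurve : ∀ θ, 1 ≤ θ → (1 + θ * z θ) * exp (-(θ * z θ)) = (1 - z θ) * exp (z θ) := by
    intro θ hθ
    rcases hθ.eq_or_lt with rfl | hθ
    · simp [hz1]
    · linear_combination (hzeq θ (by linarith) hθ.ne').2
  have hmono : StrictMonoOn (fun θ => 1 - exp (z θ) / (1 + θ * z θ)) (Ici 1) := by
    intro θ₁ h₁ θ₂ h₂ h
    have h₀ : (0 : ℝ) < θ₁ := one_pos.trans_le h₁
    have := exp_div_one_add_lt_of_lt (hz_nonneg θ₁ h₁) (hzm h₀ (h₀.trans h) h)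
      (hzlt θ₂ (h₀.trans h)) (mul_nonneg h₀.le (hz_nonneg θ₁ h₁))
      (mul_nonneg (h₀.trans h).le (hz_nonneg θ₂ h₂)) (hcurve θ₁ h₁) (hcurve θ₂ h₂)
    linarith
  have hcont : ContinuousOn (fun θ => 1 - exp (z θ) / (1 + θ * z θ)) (Ici 1) := by
    have hzc' := hzc.mono fun θ (hθ : 1 ≤ θ) => one_pos.trans_le hθ
    refine continuousOn_const.sub ((continuous_exp.comp_continuousOn hzc').div
      (continuousOn_const.add (continuousOn_id.mul hzc')) fun θ hθ => ?_)
    have := hz_nonneg θ hθ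
    have : (0 : ℝ) ≤ θ := zero_le_one.trans hθ
    positivity
  have hlim : Tendsto (fun θ => 1 - exp (z θ) / (1 + θ * z θ)) atTop (𝓝 1) := by
    have hz2 : 0 < z 2 := hz1 ▸ hzm (mem_Ioi.2 one_pos) (mem_Ioi.2 two_pos) one_lt_two
    simpa using tendsto_const_nhds.sub (tendsto_exp_div_one_add_mul_atTop hz2
      ((eventually_ge_atTop 2).mono fun θ hθ => hzm.monotoneOn (mem_Ioi.2 two_pos) (mem_Ioi.2 (by linarith)) hθ)
      ((eventually_gt_atTop 0).mono fun θ hθ => (hzlt θ hθ).le))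
  exact ⟨by simp [hz1], hmono, hlim, fun s hs =>
    hmono.existsUnique_eq_of_tendsto_atTop hcont hlim (by simpa [hz1] using hs)⟩
end
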